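/- arXiv:0907.2101 — 7 statements merged into one kernel-verified Lean document; each statement's English description precedes it below -/
import Mathlib

section
/- Let a₁ > 0. There exists a constant c₁ > 0 such that for every a₂ > 0, every λ ∈ (0,1), every θ ≥ 0, every α > 0, and all functions f, g : ℤ → ℂ satisfying |f(q)| ≤ λ and |g(q)| ≤ λ^{1+θ} for all q ∈ ℤ, and |f(q)| ≤ a₁/|q|² and |g(q)| ≤ a₂/|q|^{1+α} for all q ≠ 0, the convolution f*g is absolutely convergent at every q ∈ ℤ and satisfies |(f*g)(q)| ≤ a₁^{3/4} · c₁ · λ^{1 + 1/4 + θ} for all q ∈ ℤ. -/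
/-- Convolution of two sequences on `ℤ`. -/
noncomputable def conv (f g : ℤ → ℂ) (q : ℤ) : ℂ := ∑' k : ℤ, f (q - k) * g k

/-!
Interpolating the two bounds on `f` gives `‖f m‖ ≤ λ ^ (1/4) * (a₁ / m²) ^ (3/4)`, which decays
like `|m| ^ (-3/2)` and is therefore summable, with `‖f‖₁ = O(a₁ ^ (3/4) * λ ^ (1/4))`.
The convolution is then controlled by `‖f * g‖_∞ ≤ ‖f‖₁ * ‖g‖_∞ ≤ ‖f‖₁ * λ ^ (1 + θ)`.
-/

open Real

lemma le_rpow_mul_rpow_of_le_of_le {x a b t : ℝ} (hx : 0 ≤ x) (ha : x ≤ a) (hb : x ≤ b)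
    (ht₀ : 0 ≤ t) (ht₁ : t ≤ 1) : x ≤ a ^ t * b ^ (1 - t) := calc
  x = x ^ t * x ^ (1 - t) := by rw [← rpow_add' hx (by norm_num), add_sub_cancel, rpow_one]
  _ ≤ a ^ t * b ^ (1 - t) :=
    mul_le_mul (by gcongr) (by gcongr) (by positivity) (rpow_nonneg (hx.trans ha) t)

lemma div_sq_rpow_three_quarters {a : ℝ} (ha : 0 ≤ a) (x : ℝ) :
    (a / |x| ^ 2) ^ (3 / 4 : ℝ) = a ^ (3 / 4 : ℝ) * |x| ^ (-(3 / 2) : ℝ) := by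
  rw [div_rpow ha (by positivity), ← rpow_natCast, ← rpow_mul (abs_nonneg x),
    rpow_neg (abs_nonneg x), div_eq_mul_inv]
  norm_num

section DecayInterpolation

variable {E : Type*} [SeminormedAddGroup E] {f : ℤ → E} {l a : ℝ}

lemma norm_le_of_le_of_le_div_sq (hl₁ : l ≤ 1) (ha : 0 ≤ a) (hfl : ∀ m, ‖f m‖ ≤ l)
    (hfa : ∀ m ≠ 0, ‖f m‖ ≤ a / |(m : ℝ)| ^ 2) (m : ℤ) :
    ‖f m‖ ≤ l ^ (1 / 4 : ℝ) *
      ((Pi.single 0 1 : ℤ → ℝ) m + a ^ (3 / 4 : ℝ) * |(m : ℝ)| ^ (-(3 / 2) : ℝ)) := by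
  have hl₀ : 0 ≤ l := (norm_nonneg _).trans (hfl 0)
  rcases eq_or_ne m 0 with rfl | hm
  · calc ‖f 0‖ ≤ l := hfl 0
      _ ≤ l ^ (1 / 4 : ℝ) := self_le_rpow_of_le_one hl₀ hl₁ (by norm_num)
      _ ≤ _ := by
        rw [Pi.single_eq_same]
        exact le_mul_of_one_le_right (by positivity) (le_add_of_nonneg_right (by positivity))
  · calc ‖f m‖ ≤ l ^ (1 / 4 : ℝ) * (a / |(m : ℝ)| ^ 2) ^ (1 - 1 / 4 : ℝ) :=
          le_rpow_mul_rpow_of_le_of_le (norm_nonneg _) (hfl m) (hfa m hm) (by norm_num)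
            (by norm_num)
      _ = _ := by
        rw [Pi.single_eq_of_ne hm, zero_add, ← div_sq_rpow_three_quarters ha]
        norm_num

lemma summable_norm_and_tsum_norm_le_of_le_of_le_div_sq (hl₁ : l ≤ 1) (ha : 0 ≤ a)
    (hfl : ∀ m, ‖f m‖ ≤ l) (hfa : ∀ m ≠ 0, ‖f m‖ ≤ a / |(m : ℝ)| ^ 2) :
    Summable (fun m ↦ ‖f m‖) ∧
      ∑' m, ‖f m‖ ≤ l ^ (1 / 4 : ℝ) *
        (1 + a ^ (3 / 4 : ℝ) * ∑' n : ℤ, |(n : ℝ)| ^ (-(3 / 2) : ℝ)) := by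
  have hdecay : Summable fun n : ℤ ↦ |(n : ℝ)| ^ (-(3 / 2) : ℝ) :=
    summable_abs_int_rpow (by norm_num)
  have hmajorant : HasSum
      (fun m : ℤ ↦ l ^ (1 / 4 : ℝ) *
        ((Pi.single 0 1 : ℤ → ℝ) m + a ^ (3 / 4 : ℝ) * |(m : ℝ)| ^ (-(3 / 2) : ℝ)))
      (l ^ (1 / 4 : ℝ) *
        (1 + a ^ (3 / 4 : ℝ) * ∑' n : ℤ, |(n : ℝ)| ^ (-(3 / 2) : ℝ))) :=
    ((hasSum_pi_single 0 1).add (hdecay.hasSum.mul_left _)).mul_left _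
  have hbound := norm_le_of_le_of_le_div_sq hl₁ ha hfl hfa
  have hsum : Summable fun m ↦ ‖f m‖ :=
    hmajorant.summable.of_nonneg_of_le (fun _ ↦ norm_nonneg _) hbound
  exact ⟨hsum, hasSum_le hbound hsum.hasSum hmajorant⟩

end DecayInterpolation

section Convolution

variable {f g : ℤ → ℂ} {M : ℝ}

lemma summable_norm_mul_of_summable_norm_of_bounded (hf : Summable fun m ↦ ‖f m‖)
    (hg : ∀ k, ‖g k‖ ≤ M) (q : ℤ) :
    Summable fun k ↦ ‖f (q - k) * g k‖ :=
  (((Equiv.subLeft q).summable_iff.mpr hf).mul_right M).of_nonneg_of_le (fun _ ↦ norm_nonneg _)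
    fun k ↦ (norm_mul_le _ _).trans (mul_le_mul_of_nonneg_left (hg k) (norm_nonneg _))

lemma norm_conv_le_of_summable_norm_of_bounded (hf : Summable fun m ↦ ‖f m‖)
    (hg : ∀ k, ‖g k‖ ≤ M) (q : ℤ) :
    ‖conv f g q‖ ≤ (∑' m, ‖f m‖) * M := by
  have hsum := summable_norm_mul_of_summable_norm_of_bounded hf hg q
  have hfq : Summable fun k ↦ ‖f (q - k)‖ := (Equiv.subLeft q).summable_iff.mpr hf
  calc ‖conv f g q‖ ≤ ∑' k, ‖f (q - k) * g k‖ := norm_tsum_le_tsum_norm hsum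
    _ ≤ ∑' k, ‖f (q - k)‖ * M :=
        hsum.tsum_le_tsum
          (fun k ↦ (norm_mul_le _ _).trans (mul_le_mul_of_nonneg_left (hg k) (norm_nonneg _)))
          (hfq.mul_right M)
    _ = (∑' m, ‖f m‖) * M := by
        rw [tsum_mul_right]
        exact congrArg (· * M) ((Equiv.subLeft q).tsum_eq fun m ↦ ‖f m‖)

end Convolution

theorem stmt0 (a₁ : ℝ) (ha₁ : 0 < a₁) :
    ∃ c₁ : ℝ, 0 < c₁ ∧
      ∀ (a₂ : ℝ), 0 < a₂ →
      ∀ (l : ℝ), l ∈ Set.Ioo (0 : ℝ) 1 →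
      ∀ (θ : ℝ), 0 ≤ θ →
      ∀ (α : ℝ), 0 < α →
      ∀ (f g : ℤ → ℂ),
        (∀ q : ℤ, ‖f q‖ ≤ l) →
        (∀ q : ℤ, ‖g q‖ ≤ l ^ ((1 : ℝ) + θ)) →
        (∀ q : ℤ, q ≠ 0 → ‖f q‖ ≤ a₁ / |(q : ℝ)| ^ (2 : ℕ)) →
        (∀ q : ℤ, q ≠ 0 → ‖g q‖ ≤ a₂ / |(q : ℝ)| ^ ((1 : ℝ) + α)) →
        ∀ q : ℤ,
          Summable (fun k : ℤ => ‖f (q - k) * g k‖) ∧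
          ‖conv f g q‖ ≤ a₁ ^ ((3 : ℝ) / 4) * c₁ * l ^ ((1 : ℝ) + 1 / 4 + θ) := by
  set S := ∑' n : ℤ, |(n : ℝ)| ^ (-(3 / 2) : ℝ)
  have hS : 0 ≤ S := tsum_nonneg fun _ ↦ by positivity
  refine ⟨a₁ ^ (-(3 / 4) : ℝ) + S, by positivity, ?_⟩
  rintro - - l ⟨hl₀, hl₁⟩ θ - - - f g hfl hgl hfa - q
  obtain ⟨hf, hf_tsum⟩ :=
    summable_norm_and_tsum_norm_le_of_le_of_le_div_sq hl₁.le ha₁.le hfl hfa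
  refine ⟨summable_norm_mul_of_summable_norm_of_bounded hf hgl q, ?_⟩
  calc ‖conv f g q‖ ≤ (∑' m, ‖f m‖) * l ^ ((1 : ℝ) + θ) :=
        norm_conv_le_of_summable_norm_of_bounded hf hgl q
    _ ≤ l ^ (1 / 4 : ℝ) * (1 + a₁ ^ (3 / 4 : ℝ) * S) * l ^ ((1 : ℝ) + θ) := by gcongr
    _ = a₁ ^ ((3 : ℝ) / 4) * (a₁ ^ (-(3 / 4) : ℝ) + S) * l ^ ((1 : ℝ) + 1 / 4 + θ) := by
        rw [add_comm (1 : ℝ) (1 / 4), add_assoc, rpow_add hl₀ (1 / 4), rpow_neg ha₁.le]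
        field_simp
end

section
/- Let α > 0, η ≥ 0 and β ≥ 0 satisfy β ≤ 2(1−η), β ≤ 1+α and β < 1 + α/2 − η. Then there exists a constant c̃ > 0 such that for every q ∈ ℤ with q ≠ 0, the series Σ_{k∈ℤ, k≠0, k≠q} |q−k|^{−2(1−η)} · |k|^{−(1+α)} converges and is bounded above by 2^β · c̃ · |q|^{−β}. -/
open Real

-- key pointwise inequality
lemma key_ineq {a b β Q x y : ℝ} (hβ : 0 ≤ β) (ha : β ≤ a) (hb : β ≤ b)
    (hx : 1 ≤ x) (hy : 1 ≤ y) (hQ : Q ≤ x + y) (hQ0 : 0 < Q) :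
    y ^ (-a) * x ^ (-b) ≤
      2 ^ β * Q ^ (-β) * (x ^ (-(a + b - β)) + y ^ (-(a + b - β))) := by
  have hx0 : (0:ℝ) < x := lt_of_lt_of_le one_pos hx
  have hy0 : (0:ℝ) < y := lt_of_lt_of_le one_pos hy
  have hcoef : 0 ≤ 2 ^ β * Q ^ (-β) := by positivity
  rcases le_total x y with hxy | hxy
  · -- y is the max, y ≥ Q/2
    have h1 : y ^ (-β) ≤ 2 ^ β * Q ^ (-β) := by
      have hQ2 : Q / 2 ≤ y := by linarith
      have := Real.rpow_le_rpow_of_nonpos (by positivity : (0:ℝ) < Q/2) hQ2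
        (neg_nonpos.mpr hβ)
      calc y ^ (-β) ≤ (Q/2) ^ (-β) := this
        _ = 2 ^ β * Q ^ (-β) := by
            rw [Real.rpow_neg (by positivity), div_rpow hQ0.le (by norm_num),
              Real.rpow_neg hQ0.le, inv_div, div_eq_mul_inv]
    have h2 : y ^ (-(a - β)) ≤ x ^ (-(a - β)) :=
      Real.rpow_le_rpow_of_nonpos hx0 hxy (neg_nonpos.mpr (by linarith))
    have hsplit : y ^ (-a) = y ^ (-β) * y ^ (-(a - β)) := by
      rw [← Real.rpow_add hy0]; ring_nf
    have hxs : x ^ (-(a - β)) * x ^ (-b) = x ^ (-(a + b - β)) := by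
      rw [← Real.rpow_add hx0]; ring_nf
    have : y ^ (-a) * x ^ (-b) ≤ 2 ^ β * Q ^ (-β) * x ^ (-(a + b - β)) := by
      rw [hsplit, ← hxs]
      have hxb : (0:ℝ) ≤ x ^ (-b) := (Real.rpow_pos_of_pos hx0 _).le
      have hyab : (0:ℝ) ≤ y ^ (-(a-β)) := (Real.rpow_pos_of_pos hy0 _).le
      calc y ^ (-β) * y ^ (-(a-β)) * x ^ (-b)
          ≤ (2 ^ β * Q ^ (-β)) * y ^ (-(a-β)) * x ^ (-b) := by
            apply mul_le_mul_of_nonneg_right (mul_le_mul_of_nonneg_right h1 hyab) hxb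
        _ ≤ (2 ^ β * Q ^ (-β)) * x ^ (-(a-β)) * x ^ (-b) := by
            apply mul_le_mul_of_nonneg_right (mul_le_mul_of_nonneg_left h2 hcoef) hxb
        _ = 2 ^ β * Q ^ (-β) * (x ^ (-(a-β)) * x ^ (-b)) := by ring
    refine this.trans ?_
    have : (0:ℝ) ≤ y ^ (-(a + b - β)) := (Real.rpow_pos_of_pos hy0 _).le
    nlinarith [hcoef]
  · -- x is the max, x ≥ Q/2
    have h1 : x ^ (-β) ≤ 2 ^ β * Q ^ (-β) := by
      have hQ2 : Q / 2 ≤ x := by linarith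
      have := Real.rpow_le_rpow_of_nonpos (by positivity : (0:ℝ) < Q/2) hQ2
        (neg_nonpos.mpr hβ)
      calc x ^ (-β) ≤ (Q/2) ^ (-β) := this
        _ = 2 ^ β * Q ^ (-β) := by
            rw [Real.rpow_neg (by positivity), div_rpow hQ0.le (by norm_num),
              Real.rpow_neg hQ0.le, inv_div, div_eq_mul_inv]
    have h2 : x ^ (-(b - β)) ≤ y ^ (-(b - β)) :=
      Real.rpow_le_rpow_of_nonpos hy0 hxy (neg_nonpos.mpr (by linarith))
    have hsplit : x ^ (-b) = x ^ (-β) * x ^ (-(b - β)) := by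
      rw [← Real.rpow_add hx0]; ring_nf
    have hys : y ^ (-a) * y ^ (-(b - β)) = y ^ (-(a + b - β)) := by
      rw [← Real.rpow_add hy0]; ring_nf
    have : y ^ (-a) * x ^ (-b) ≤ 2 ^ β * Q ^ (-β) * y ^ (-(a + b - β)) := by
      rw [hsplit, ← hys]
      have hya : (0:ℝ) ≤ y ^ (-a) := (Real.rpow_pos_of_pos hy0 _).le
      have hxbb : (0:ℝ) ≤ x ^ (-(b-β)) := (Real.rpow_pos_of_pos hx0 _).le
      calc y ^ (-a) * (x ^ (-β) * x ^ (-(b-β)))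
          ≤ y ^ (-a) * ((2 ^ β * Q ^ (-β)) * x ^ (-(b-β))) := by
            apply mul_le_mul_of_nonneg_left (mul_le_mul_of_nonneg_right h1 hxbb) hya
        _ ≤ y ^ (-a) * ((2 ^ β * Q ^ (-β)) * y ^ (-(b-β))) := by
            apply mul_le_mul_of_nonneg_left (mul_le_mul_of_nonneg_left h2 hcoef) hya
        _ = 2 ^ β * Q ^ (-β) * (y ^ (-a) * y ^ (-(b-β))) := by ring
    refine this.trans ?_
    have : (0:ℝ) ≤ x ^ (-(a + b - β)) := (Real.rpow_pos_of_pos hx0 _).le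
    nlinarith [hcoef]

open Real

theorem stmt2 (α η β : ℝ) (hα : 0 < α) (hη : 0 ≤ η) (hβ : 0 ≤ β)
    (hβ1 : β ≤ 2 * (1 - η)) (hβ2 : β ≤ 1 + α) (hβ3 : β < 1 + α / 2 - η) :
    ∃ ctilde : ℝ, 0 < ctilde ∧
      ∀ q : ℤ, q ≠ 0 →
        Summable (fun k : {k : ℤ // k ≠ 0 ∧ k ≠ q} =>
          |((q - (k : ℤ) : ℤ) : ℝ)| ^ (-(2 * (1 - η))) * |((k : ℤ) : ℝ)| ^ (-(1 + α))) ∧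
        (∑' k : {k : ℤ // k ≠ 0 ∧ k ≠ q},
            |((q - (k : ℤ) : ℤ) : ℝ)| ^ (-(2 * (1 - η))) * |((k : ℤ) : ℝ)| ^ (-(1 + α))) ≤
          (2 : ℝ) ^ β * ctilde * |(q : ℝ)| ^ (-β) := by
  set a : ℝ := 2 * (1 - η) with ha_def
  set b : ℝ := 1 + α with hb_def
  set s : ℝ := a + b - β with hs_def
  have hs : 1 < s := by simp only [hs_def, ha_def, hb_def]; linarith
  -- the basic summable function
  have hsum : Summable fun n : ℤ => |(n : ℝ)| ^ (-s) := Real.summable_abs_int_rpow hs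
  set C : ℝ := ∑' n : ℤ, |(n : ℝ)| ^ (-s) with hC_def
  have hCpos : 0 < C := by
    have h1 : (1:ℝ) ≤ C := by
      have := Summable.le_tsum hsum 1 (fun n _ => by positivity)
      simpa using this
    linarith
  refine ⟨2 * C, by linarith, fun q hq => ?_⟩
  have hq1 : (1:ℝ) ≤ |(q : ℝ)| := by
    rw [← Int.cast_abs]; exact_mod_cast Int.one_le_abs hq
  have hq0 : (0:ℝ) < |(q : ℝ)| := lt_of_lt_of_le one_pos hq1
  -- summability of the dominating function
  have hsum2 : Summable fun n : ℤ => |((q - n : ℤ) : ℝ)| ^ (-s) := by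
    have := hsum.comp_injective (Equiv.subLeft q).injective
    exact this.congr fun n => by simp [Equiv.subLeft]
  set g : ℤ → ℝ := fun n => 2 ^ β * |(q:ℝ)| ^ (-β) *
      (|(n : ℝ)| ^ (-s) + |((q - n : ℤ) : ℝ)| ^ (-s)) with hg_def
  have hgsum : Summable g := ((hsum.add hsum2).mul_left _)
  -- pointwise bound on the subtype
  have hbound : ∀ k : {k : ℤ // k ≠ 0 ∧ k ≠ q},
      |((q - (k : ℤ) : ℤ) : ℝ)| ^ (-a) * |((k : ℤ) : ℝ)| ^ (-b) ≤ g k := by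
    rintro ⟨k, hk0, hkq⟩
    have hx : (1:ℝ) ≤ |(k : ℝ)| := by
      rw [← Int.cast_abs]; exact_mod_cast Int.one_le_abs hk0
    have hy : (1:ℝ) ≤ |((q - k : ℤ) : ℝ)| := by
      rw [← Int.cast_abs]
      exact_mod_cast Int.one_le_abs (sub_ne_zero.mpr (Ne.symm hkq))
    have hQ : |(q:ℝ)| ≤ |(k : ℝ)| + |((q - k : ℤ) : ℝ)| := by
      push_cast
      have := abs_sub_abs_le_abs_sub (q:ℝ) ((q:ℝ) - k)
      have h2 := abs_abs_sub_abs_le_abs_sub (q:ℝ) ((q:ℝ) - k)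
      calc |(q:ℝ)| = |(q:ℝ) - (k:ℝ) + k| := by ring_nf
        _ ≤ |(q:ℝ) - k| + |(k:ℝ)| := abs_add_le _ _
        _ = |(k:ℝ)| + |(q:ℝ) - k| := by ring
    have key := key_ineq hβ hβ1 hβ2 hx hy hQ hq0
    simp only [hg_def]
    convert key using 2 <;> push_cast <;> ring_nf
  have hnonneg : ∀ k : {k : ℤ // k ≠ 0 ∧ k ≠ q},
      0 ≤ |((q - (k : ℤ) : ℤ) : ℝ)| ^ (-a) * |((k : ℤ) : ℝ)| ^ (-b) := fun k => by positivity
  have hgsub : Summable fun k : {k : ℤ // k ≠ 0 ∧ k ≠ q} => g k :=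
    hgsum.subtype _
  have hfsum : Summable (fun k : {k : ℤ // k ≠ 0 ∧ k ≠ q} =>
      |((q - (k : ℤ) : ℤ) : ℝ)| ^ (-a) * |((k : ℤ) : ℝ)| ^ (-b)) :=
    Summable.of_nonneg_of_le hnonneg hbound hgsub
  refine ⟨hfsum, ?_⟩
  have h1 : (∑' k : {k : ℤ // k ≠ 0 ∧ k ≠ q},
      |((q - (k : ℤ) : ℤ) : ℝ)| ^ (-a) * |((k : ℤ) : ℝ)| ^ (-b)) ≤
      ∑' k : {k : ℤ // k ≠ 0 ∧ k ≠ q}, g k :=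
    Summable.tsum_le_tsum hbound hfsum hgsub
  have h2 : (∑' k : {k : ℤ // k ≠ 0 ∧ k ≠ q}, g k) ≤ ∑' n : ℤ, g n := by
    have : ∀ n : ℤ, 0 ≤ g n := fun n => by
      have : (0:ℝ) ≤ |(n : ℝ)| ^ (-s) + |((q - n : ℤ) : ℝ)| ^ (-s) := by positivity
      simp only [hg_def]; positivity
    exact Summable.tsum_subtype_le g {k : ℤ | k ≠ 0 ∧ k ≠ q} this hgsum
  have h3 : (∑' n : ℤ, g n) = 2 ^ β * |(q:ℝ)| ^ (-β) * (C + ∑' n : ℤ, |((q - n : ℤ) : ℝ)| ^ (-s)) := by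
    simp only [hg_def]
    rw [tsum_mul_left, Summable.tsum_add hsum hsum2]
  have h4 : (∑' n : ℤ, |((q - n : ℤ) : ℝ)| ^ (-s)) = C := by
    rw [hC_def]
    exact ((Equiv.subLeft q).tsum_eq (fun n : ℤ => |(n : ℝ)| ^ (-s)))
  calc (∑' k : {k : ℤ // k ≠ 0 ∧ k ≠ q},
      |((q - (k : ℤ) : ℤ) : ℝ)| ^ (-a) * |((k : ℤ) : ℝ)| ^ (-b))
      ≤ ∑' n : ℤ, g n := h1.trans h2
    _ = 2 ^ β * |(q:ℝ)| ^ (-β) * (C + C) := by rw [h3, h4]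
    _ = 2 ^ β * (2 * C) * |(q:ℝ)| ^ (-β) := by ring
end

section
/- For every a₀ > 0 and every integer N ≥ 2 there exists ε₀ ∈ (0,1) such that: for every ε ∈ (0, ε₀] and every P : ℤ → ℂ with |P(q)| ≤ ε for all q ∈ ℤ and |P(q)| ≤ a₀/q² for all q ≠ 0, one has |S(1,n,P)(q)| ≤ ε^{1 + (n−1)/8} for every integer n with 2 ≤ n ≤ N and every q ∈ ℤ. -/
/-!
Young's inequality `‖P * Q‖_∞ ≤ ‖P‖_1 ‖Q‖_∞` gives `‖S(1,n,P)‖_∞ ≤ ε ‖P‖_1^(n-1)`.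
Interpolating the two hypotheses as `|P(q)| ≤ ε^(1/4) (a₀/q²)^(3/4)` gives a summable majorant,
so `‖P‖_1 ≤ ε^(1/4) M` with `M` depending only on `a₀`. Once `ε^(1/8) M ≤ 1` this is at most
`ε^(1/8)`, whence `‖S(1,n,P)‖_∞ ≤ ε^(1 + (n-1)/8)`.
-/

/-- `Sconv P n` is the `n`-fold self-convolution of the sequence `P : ℤ → ℂ`:
`Sconv P 1 = P` and `Sconv P n = P * Sconv P (n-1)` (convolution on `ℤ`). -/
noncomputable def Sconv (P : ℤ → ℂ) : ℕ → ℤ → ℂ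
  | 0 => fun _ => 0
  | 1 => P
  | (n + 2) => fun q => ∑' k : ℤ, P (q - k) * Sconv P (n + 1) k

open Real

lemma norm_tsum_sub_mul_le {R : Type*} [NormedRing R] {f g : ℤ → R} (hf : Summable fun k => ‖f k‖) {B : ℝ}
    (hg : ∀ k, ‖g k‖ ≤ B) (q : ℤ) :
    ‖∑' k, f (q - k) * g k‖ ≤ (∑' k, ‖f k‖) * B := by
  have hshift : HasSum (fun k => ‖f (q - k)‖) (∑' k, ‖f k‖) :=
    (Equiv.subLeft q).hasSum_iff.2 hf.hasSum
  exact tsum_of_norm_bounded (hshift.mul_right B) fun k =>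
    (norm_mul_le _ _).trans (mul_le_mul_of_nonneg_left (hg k) (norm_nonneg _))

lemma norm_sconv_succ_le {P : ℤ → ℂ} {ε : ℝ} (hPε : ∀ q, ‖P q‖ ≤ ε)
    (hP : Summable fun k => ‖P k‖) (n : ℕ) (q : ℤ) :
    ‖Sconv P (n + 1) q‖ ≤ ε * (∑' k, ‖P k‖) ^ n := by
  induction n generalizing q with
  | zero => simpa [Sconv] using hPε q
  | succ n ih =>
    calc ‖Sconv P (n + 2) q‖ = ‖∑' k, P (q - k) * Sconv P (n + 1) k‖ := rfl
      _ ≤ (∑' k, ‖P k‖) * (ε * (∑' k, ‖P k‖) ^ n) := norm_tsum_sub_mul_le hP ih q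
      _ = ε * (∑' k, ‖P k‖) ^ (n + 1) := by ring

lemma le_rpow_mul_rpow_of_le_of_le_s3 {x a b θ : ℝ} (hx : 0 ≤ x) (hxa : x ≤ a) (hxb : x ≤ b)
    (hθ₀ : 0 ≤ θ) (hθ₁ : θ ≤ 1) : x ≤ a ^ θ * b ^ (1 - θ) :=
  calc x = x ^ θ * x ^ (1 - θ) := by rw [← rpow_add' hx (by norm_num), add_sub_cancel, rpow_one]
    _ ≤ a ^ θ * b ^ (1 - θ) :=
      mul_le_mul (rpow_le_rpow hx hxa hθ₀) (rpow_le_rpow hx hxb (by linarith))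
        (rpow_nonneg hx _) (rpow_nonneg (hx.trans hxa) _)

lemma div_sq_rpow {a : ℝ} (ha : 0 ≤ a) (x p : ℝ) :
    (a / x ^ 2) ^ p = a ^ p * |x| ^ (-(2 * p)) := by
  rw [div_rpow ha (sq_nonneg x), ← sq_abs, ← rpow_natCast, ← rpow_mul (abs_nonneg x),
    rpow_neg (abs_nonneg x), div_eq_mul_inv]
  norm_num

lemma norm_le_rpow_mul_majorant {P : ℤ → ℂ} {ε a : ℝ} (hε : ε ≤ 1) (ha : 0 ≤ a)
    (hPε : ∀ q, ‖P q‖ ≤ ε) (hPa : ∀ q : ℤ, q ≠ 0 → ‖P q‖ ≤ a / (q : ℝ) ^ 2) (k : ℤ) :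
    ‖P k‖ ≤ ε ^ (1 / 4 : ℝ) *
      ((if k = 0 then 1 else 0) + a ^ (3 / 4 : ℝ) * |(k : ℝ)| ^ (-(3 / 2) : ℝ)) := by
  have hε₀ : 0 ≤ ε := (norm_nonneg _).trans (hPε k)
  rcases eq_or_ne k 0 with rfl | hk
  · have hε_le : ε ≤ ε ^ (1 / 4 : ℝ) := by
      simpa using rpow_le_rpow_of_exponent_ge' hε₀ hε (by norm_num) (by norm_num : (1 / 4 : ℝ) ≤ 1)
    simpa [zero_rpow (by norm_num : (-(3 / 2) : ℝ) ≠ 0)] using (hPε 0).trans hε_le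
  · have h := le_rpow_mul_rpow_of_le_of_le_s3 (norm_nonneg _) (hPε k) (hPa k hk)
      (by norm_num : (0 : ℝ) ≤ 1 / 4) (by norm_num)
    rw [div_sq_rpow ha] at h
    norm_num [hk] at h ⊢
    exact h

lemma summable_norm_and_tsum_norm_le {P : ℤ → ℂ} {ε a : ℝ} (hε : ε ≤ 1) (ha : 0 ≤ a)
    (hPε : ∀ q, ‖P q‖ ≤ ε) (hPa : ∀ q : ℤ, q ≠ 0 → ‖P q‖ ≤ a / (q : ℝ) ^ 2) :
    Summable (fun k => ‖P k‖) ∧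
      ∑' k, ‖P k‖ ≤
        ε ^ (1 / 4 : ℝ) * (1 + a ^ (3 / 4 : ℝ) * ∑' k : ℤ, |(k : ℝ)| ^ (-(3 / 2) : ℝ)) := by
  have hdecay : Summable fun k : ℤ => |(k : ℝ)| ^ (-(3 / 2) : ℝ) :=
    summable_abs_int_rpow (by norm_num)
  have hdelta : HasSum (fun k : ℤ => if k = 0 then (1 : ℝ) else 0) 1 := hasSum_ite_eq 0 1
  have hmajorant := ((hdelta.add (hdecay.hasSum.mul_left (a ^ (3 / 4 : ℝ)))).mul_left
    (ε ^ (1 / 4 : ℝ)))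
  have hbound := norm_le_rpow_mul_majorant hε ha hPε hPa
  have hsum : Summable fun k => ‖P k‖ :=
    hmajorant.summable.of_nonneg_of_le (fun _ => norm_nonneg _) hbound
  exact ⟨hsum, hasSum_le hbound hsum.hasSum hmajorant⟩

lemma rpow_one_div_four_mul_le_rpow_one_div_eight {ε M : ℝ} (hε : 0 < ε) (hM : 0 < M)
    (h : ε ≤ M⁻¹ ^ 8) : ε ^ (1 / 4 : ℝ) * M ≤ ε ^ (1 / 8 : ℝ) := by
  have hroot : ε ^ (1 / 8 : ℝ) ≤ M⁻¹ := by
    rw [show (1 / 8 : ℝ) = (8 : ℝ)⁻¹ by norm_num,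
      rpow_inv_le_iff_of_pos hε.le (by positivity) (by norm_num)]
    exact_mod_cast h
  calc ε ^ (1 / 4 : ℝ) * M = ε ^ (1 / 8 : ℝ) * (ε ^ (1 / 8 : ℝ) * M) := by
        rw [← mul_assoc, ← rpow_add hε]; norm_num
    _ ≤ ε ^ (1 / 8 : ℝ) * (M⁻¹ * M) := by gcongr
    _ = ε ^ (1 / 8 : ℝ) := by rw [inv_mul_cancel₀ hM.ne', mul_one]

theorem stmt3_general (a₀ : ℝ) (ha₀ : 0 < a₀) (N : ℕ) :
    ∃ ε₀ ∈ Set.Ioo (0 : ℝ) 1,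
      ∀ ε : ℝ, ε ∈ Set.Ioc (0 : ℝ) ε₀ →
      ∀ P : ℤ → ℂ,
        (∀ q : ℤ, ‖P q‖ ≤ ε) →
        (∀ q : ℤ, q ≠ 0 → ‖P q‖ ≤ a₀ / (q : ℝ) ^ 2) →
        ∀ n : ℕ, 2 ≤ n → n ≤ N →
        ∀ q : ℤ, ‖Sconv P n q‖ ≤ ε ^ ((1 : ℝ) + ((n : ℝ) - 1) / 8) := by
  set M : ℝ := 1 + a₀ ^ (3 / 4 : ℝ) * ∑' k : ℤ, |(k : ℝ)| ^ (-(3 / 2) : ℝ)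
  have hM : 1 ≤ M := le_add_of_nonneg_right <| mul_nonneg (rpow_nonneg ha₀.le _) <|
    tsum_nonneg fun _ => rpow_nonneg (abs_nonneg _) _
  have hM8 : M⁻¹ ^ 8 ≤ 1 := pow_le_one₀ (by positivity) (inv_le_one_of_one_le₀ hM)
  refine ⟨M⁻¹ ^ 8 / 2, ⟨by positivity, by linarith⟩, ?_⟩
  rintro ε ⟨hε₀, hεε₀⟩ P hPε hPa n hn - q
  obtain ⟨m, rfl⟩ : ∃ m, n = m + 1 := ⟨n - 1, by omega⟩
  have hε : ε ≤ M⁻¹ ^ 8 := by linarith [pow_nonneg (inv_nonneg.2 (zero_le_one.trans hM)) 8]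
  obtain ⟨hsum, hl1⟩ := summable_norm_and_tsum_norm_le (hε.trans hM8) ha₀.le hPε hPa
  have hl1' : ∑' k, ‖P k‖ ≤ ε ^ (1 / 8 : ℝ) :=
    hl1.trans (rpow_one_div_four_mul_le_rpow_one_div_eight hε₀ (by positivity) hε)
  calc ‖Sconv P (m + 1) q‖ ≤ ε * (∑' k, ‖P k‖) ^ m := norm_sconv_succ_le hPε hsum m q
    _ ≤ ε * (ε ^ (1 / 8 : ℝ)) ^ m := by gcongr
    _ = ε ^ ((1 : ℝ) + ((↑(m + 1) : ℝ) - 1) / 8) := by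
      rw [← rpow_mul_natCast hε₀.le, rpow_add hε₀, rpow_one]; push_cast; ring_nf

theorem stmt3 (a₀ : ℝ) (ha₀ : 0 < a₀) (N : ℕ) (hN : 2 ≤ N) :
    ∃ ε₀ ∈ Set.Ioo (0 : ℝ) 1,
      ∀ ε : ℝ, ε ∈ Set.Ioc (0 : ℝ) ε₀ →
      ∀ P : ℤ → ℂ,
        (∀ q : ℤ, ‖P q‖ ≤ ε) →
        (∀ q : ℤ, q ≠ 0 → ‖P q‖ ≤ a₀ / (q : ℝ) ^ 2) →
        ∀ n : ℕ, 2 ≤ n → n ≤ N →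
        ∀ q : ℤ, ‖Sconv P n q‖ ≤ ε ^ ((1 : ℝ) + ((n : ℝ) - 1) / 8) :=
  stmt3_general a₀ ha₀ N
end

section
/- For every a₀ > 0 and every integer N ≥ 2 there exists ε₀ ∈ (0,1) such that: for every ε ∈ (0, ε₀] and every P : ℤ → ℂ with |P(q)| ≤ ε for all q ∈ ℤ and |P(q)| ≤ a₀/q² for all q ≠ 0, one has |S(1,n,P)(q)| ≤ |q|^{−(1 + 4^{−(n−1)})} for every integer n with 2 ≤ n ≤ N and every q ∈ ℤ with q ≠ 0. -/
open Real

noncomputable def intConv (f g : ℤ → ℂ) (q : ℤ) : ℂ := ∑' k : ℤ, f (q - k) * g k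

lemma Sconv_add_two (P : ℤ → ℂ) (n : ℕ) : Sconv P (n + 2) = intConv P (Sconv P (n + 1)) := rfl

def intSubShear : ℤ × ℤ ≃ ℤ × ℤ where
  toFun p := (p.1 - p.2, p.2)
  invFun p := (p.1 + p.2, p.2)
  left_inv _ := by simp
  right_inv _ := by simp

lemma sq_le_four_mul_sq_or (q k : ℝ) : q ^ 2 ≤ 4 * k ^ 2 ∨ q ^ 2 ≤ 4 * (q - k) ^ 2 := by
  by_contra! h
  nlinarith [sq_nonneg (q - 2 * k)]

section Convolution

variable {f g : ℤ → ℂ}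

lemma summable_norm_mul_norm_sub (hf : Summable (‖f ·‖)) (hg : Summable (‖g ·‖)) :
    Summable fun p : ℤ × ℤ => ‖f (p.1 - p.2)‖ * ‖g p.2‖ :=
  intSubShear.summable_iff.mpr
    (hf.mul_of_nonneg hg (fun _ => norm_nonneg _) fun _ => norm_nonneg _)

lemma norm_intConv_le_tsum (hf : Summable (‖f ·‖)) (hg : Summable (‖g ·‖)) (q : ℤ) :
    ‖intConv f g q‖ ≤ ∑' k, ‖f (q - k)‖ * ‖g k‖ := by
  have hq := (summable_norm_mul_norm_sub hf hg).prod_factor q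
  simpa only [intConv, norm_mul] using
    norm_tsum_le_tsum_norm (hq.congr fun k => (norm_mul _ _).symm)

lemma summable_norm_intConv (hf : Summable (‖f ·‖)) (hg : Summable (‖g ·‖)) :
    Summable (‖intConv f g ·‖) :=
  .of_nonneg_of_le (fun _ => norm_nonneg _) (norm_intConv_le_tsum hf hg)
    (summable_norm_mul_norm_sub hf hg).prod

lemma tsum_norm_intConv_le (hf : Summable (‖f ·‖)) (hg : Summable (‖g ·‖)) :
    ∑' q, ‖intConv f g q‖ ≤ (∑' q, ‖f q‖) * ∑' q, ‖g q‖ := by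
  have hF := summable_norm_mul_norm_sub hf hg
  calc ∑' q, ‖intConv f g q‖ ≤ ∑' q, ∑' k, ‖f (q - k)‖ * ‖g k‖ :=
        (summable_norm_intConv hf hg).tsum_le_tsum (norm_intConv_le_tsum hf hg) hF.prod
    _ = ∑' p : ℤ × ℤ, ‖f (p.1 - p.2)‖ * ‖g p.2‖ := hF.tsum_prod.symm
    _ = ∑' p : ℤ × ℤ, ‖f p.1‖ * ‖g p.2‖ := intSubShear.tsum_eq fun p => ‖f p.1‖ * ‖g p.2‖
    _ = (∑' q, ‖f q‖) * ∑' q, ‖g q‖ :=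
        (tsum_mul_tsum_of_summable_norm (f := (‖f ·‖)) (g := (‖g ·‖)) (by simpa using hf)
          (by simpa using hg)).symm

variable {A B : ℝ}

lemma norm_le_four_mul_div_sq (hB : 0 ≤ B) (hgd : ∀ q : ℤ, q ≠ 0 → ‖g q‖ ≤ B / (q : ℝ) ^ 2)
    {q k : ℤ} (hq : q ≠ 0) (hqk : (q : ℝ) ^ 2 ≤ 4 * (k : ℝ) ^ 2) :
    ‖g k‖ ≤ 4 * B / (q : ℝ) ^ 2 := by
  have hq2 : (0 : ℝ) < (q : ℝ) ^ 2 := by positivity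
  have hk : k ≠ 0 := by rintro rfl; exact hq (by simpa using hqk)
  have hk2 : (0 : ℝ) < (k : ℝ) ^ 2 := by positivity
  calc ‖g k‖ ≤ B / (k : ℝ) ^ 2 := hgd k hk
    _ ≤ 4 * B / (q : ℝ) ^ 2 := by rw [div_le_div_iff₀ hk2 hq2]; nlinarith

lemma norm_mul_norm_le_of_sq_decay (hA : 0 ≤ A) (hB : 0 ≤ B)
    (hfd : ∀ q : ℤ, q ≠ 0 → ‖f q‖ ≤ A / (q : ℝ) ^ 2)
    (hgd : ∀ q : ℤ, q ≠ 0 → ‖g q‖ ≤ B / (q : ℝ) ^ 2) {q : ℤ} (hq : q ≠ 0) (k : ℤ) :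
    ‖f (q - k)‖ * ‖g k‖ ≤ 4 / (q : ℝ) ^ 2 * (B * ‖f (q - k)‖ + A * ‖g k‖) := by
  rcases sq_le_four_mul_sq_or q k with h | h
  · calc ‖f (q - k)‖ * ‖g k‖ ≤ ‖f (q - k)‖ * (4 * B / (q : ℝ) ^ 2) := by
          gcongr; exact norm_le_four_mul_div_sq hB hgd hq h
      _ = 4 / (q : ℝ) ^ 2 * (B * ‖f (q - k)‖) := by ring
      _ ≤ _ := by gcongr; exact le_add_of_nonneg_right (by positivity)
  · calc ‖f (q - k)‖ * ‖g k‖ ≤ 4 * A / (q : ℝ) ^ 2 * ‖g k‖ := by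
          gcongr; exact norm_le_four_mul_div_sq hA hfd hq (by push_cast; exact h)
      _ = 4 / (q : ℝ) ^ 2 * (A * ‖g k‖) := by ring
      _ ≤ _ := by gcongr; exact le_add_of_nonneg_left (by positivity)

lemma norm_intConv_le_of_sq_decay (hf : Summable (‖f ·‖)) (hg : Summable (‖g ·‖))
    (hA : 0 ≤ A) (hB : 0 ≤ B) (hfd : ∀ q : ℤ, q ≠ 0 → ‖f q‖ ≤ A / (q : ℝ) ^ 2)
    (hgd : ∀ q : ℤ, q ≠ 0 → ‖g q‖ ≤ B / (q : ℝ) ^ 2) {q : ℤ} (hq : q ≠ 0) :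
    ‖intConv f g q‖ ≤ 4 / (q : ℝ) ^ 2 * (B * ∑' m, ‖f m‖ + A * ∑' m, ‖g m‖) := by
  have hshift : Summable fun k => ‖f (q - k)‖ := (Equiv.subLeft q).summable_iff.mpr hf
  have hshift' : ∑' k, ‖f (q - k)‖ = ∑' m, ‖f m‖ := (Equiv.subLeft q).tsum_eq fun m => ‖f m‖
  calc ‖intConv f g q‖ ≤ ∑' k, ‖f (q - k)‖ * ‖g k‖ := norm_intConv_le_tsum hf hg q
    _ ≤ ∑' k, 4 / (q : ℝ) ^ 2 * (B * ‖f (q - k)‖ + A * ‖g k‖) :=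
        ((summable_norm_mul_norm_sub hf hg).prod_factor q).tsum_le_tsum
          (norm_mul_norm_le_of_sq_decay hA hB hfd hgd hq)
          (((hshift.mul_left B).add (hg.mul_left A)).mul_left _)
    _ = 4 / (q : ℝ) ^ 2 * (B * ∑' m, ‖f m‖ + A * ∑' m, ‖g m‖) := by
        rw [tsum_mul_left, (hshift.mul_left B).tsum_add (hg.mul_left A), tsum_mul_left,
          tsum_mul_left, hshift']

end Convolution

section SelfConvolution

variable {P : ℤ → ℂ} {A : ℝ}

lemma Sconv_bounds (hA : 0 ≤ A) (hP : Summable (‖P ·‖)) (hL : ∑' q, ‖P q‖ ≤ 1 / 8)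
    (hPd : ∀ q : ℤ, q ≠ 0 → ‖P q‖ ≤ A / (q : ℝ) ^ 2) (n : ℕ) :
    Summable (‖Sconv P (n + 1) ·‖) ∧ ∑' q, ‖Sconv P (n + 1) q‖ ≤ ∑' q, ‖P q‖ ∧
      ∀ q : ℤ, q ≠ 0 → ‖Sconv P (n + 1) q‖ ≤ A / (q : ℝ) ^ 2 := by
  induction n with
  | zero => exact ⟨hP, le_rfl, hPd⟩
  | succ n ih =>
    obtain ⟨hS, hSL, hSd⟩ := ih
    rw [Sconv_add_two]
    have hL0 : 0 ≤ ∑' q, ‖P q‖ := tsum_nonneg fun _ => norm_nonneg _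
    refine ⟨summable_norm_intConv hP hS, ?_, fun q hq => ?_⟩
    · calc ∑' q, ‖intConv P (Sconv P (n + 1)) q‖ ≤ (∑' q, ‖P q‖) * ∑' q, ‖Sconv P (n + 1) q‖ :=
            tsum_norm_intConv_le hP hS
        _ ≤ 1 * ∑' q, ‖P q‖ := by gcongr; linarith
        _ = ∑' q, ‖P q‖ := one_mul _
    · calc ‖intConv P (Sconv P (n + 1)) q‖
          ≤ 4 / (q : ℝ) ^ 2 * (A * ∑' m, ‖P m‖ + A * ∑' m, ‖Sconv P (n + 1) m‖) :=
            norm_intConv_le_of_sq_decay hP hS hA hA hPd hSd hq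
        _ ≤ 4 / (q : ℝ) ^ 2 * (A * (1 / 8) + A * (1 / 8)) := by gcongr; linarith
        _ = A / (q : ℝ) ^ 2 := by ring

lemma norm_Sconv_add_two_le (hA : 0 ≤ A) (hP : Summable (‖P ·‖)) (hL : ∑' q, ‖P q‖ ≤ 1 / 8)
    (hPd : ∀ q : ℤ, q ≠ 0 → ‖P q‖ ≤ A / (q : ℝ) ^ 2) (n : ℕ) {q : ℤ} (hq : q ≠ 0) :
    ‖Sconv P (n + 2) q‖ ≤ 8 * A * (∑' m, ‖P m‖) / (q : ℝ) ^ 2 := by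
  obtain ⟨hS, hSL, hSd⟩ := Sconv_bounds hA hP hL hPd n
  rw [Sconv_add_two]
  calc ‖intConv P (Sconv P (n + 1)) q‖
      ≤ 4 / (q : ℝ) ^ 2 * (A * ∑' m, ‖P m‖ + A * ∑' m, ‖Sconv P (n + 1) m‖) :=
        norm_intConv_le_of_sq_decay hP hS hA hA hPd hSd hq
    _ ≤ 4 / (q : ℝ) ^ 2 * (A * ∑' m, ‖P m‖ + A * ∑' m, ‖P m‖) := by gcongr
    _ = 8 * A * (∑' m, ‖P m‖) / (q : ℝ) ^ 2 := by ring

end SelfConvolution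

lemma min_le_rpow_mul_rpow {x y t : ℝ} (hx : 0 ≤ x) (hy : 0 ≤ y) (ht0 : 0 ≤ t) (ht1 : t ≤ 1) :
    min x y ≤ x ^ t * y ^ (1 - t) := by
  have hm : 0 ≤ min x y := le_min hx hy
  have ht : 0 ≤ 1 - t := by linarith
  calc min x y = min x y ^ t * min x y ^ (1 - t) := by
        rw [← rpow_add' hm (by norm_num), add_sub_cancel, rpow_one]
    _ ≤ x ^ t * y ^ (1 - t) := by gcongr <;> simp

noncomputable def l1Const (a : ℝ) : ℝ := 1 + a ^ (3 / 4 : ℝ) * ∑' q : ℤ, |(q : ℝ)| ^ (-(3 / 2) : ℝ)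

lemma one_le_l1Const {a : ℝ} (ha : 0 ≤ a) : 1 ≤ l1Const a :=
  le_add_of_nonneg_right <| mul_nonneg (rpow_nonneg ha _) <|
    tsum_nonneg fun _ => rpow_nonneg (abs_nonneg _) _

lemma div_sq_rpow_three_div_four {a : ℝ} (ha : 0 ≤ a) (x : ℝ) :
    (a / x ^ 2) ^ (3 / 4 : ℝ) = a ^ (3 / 4 : ℝ) * |x| ^ (-(3 / 2) : ℝ) := by
  rw [div_rpow ha (sq_nonneg _), ← sq_abs, ← rpow_natCast, ← rpow_mul (abs_nonneg _),
    rpow_neg (abs_nonneg _), div_eq_mul_inv]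
  norm_num

lemma summable_norm_and_tsum_norm_le_rpow_mul {P : ℤ → ℂ} {ε a : ℝ} (hε : ε ≤ 1) (ha : 0 ≤ a)
    (hPε : ∀ q, ‖P q‖ ≤ ε) (hPd : ∀ q : ℤ, q ≠ 0 → ‖P q‖ ≤ a / (q : ℝ) ^ 2) :
    Summable (‖P ·‖) ∧ ∑' q, ‖P q‖ ≤ ε ^ (1 / 4 : ℝ) * l1Const a := by
  have hε0 : 0 ≤ ε := (norm_nonneg _).trans (hPε 0)
  set w : ℤ → ℝ := fun q =>
    (if q = 0 then 1 else 0) + a ^ (3 / 4 : ℝ) * |(q : ℝ)| ^ (-(3 / 2) : ℝ)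
  have hw : HasSum w (l1Const a) :=
    (hasSum_ite_eq 0 1).add ((summable_abs_int_rpow (b := 3 / 2) (by norm_num)).hasSum.mul_left _)
  have hPw : ∀ q, ‖P q‖ ≤ ε ^ (1 / 4 : ℝ) * w q := by
    intro q
    rcases eq_or_ne q 0 with rfl | hq
    · have hw0 : 0 ≤ a ^ (3 / 4 : ℝ) * |((0 : ℤ) : ℝ)| ^ (-(3 / 2) : ℝ) := by positivity
      calc ‖P 0‖ ≤ ε := hPε 0
        _ ≤ ε ^ (1 / 4 : ℝ) := self_le_rpow_of_le_one hε0 hε (by norm_num)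
        _ ≤ ε ^ (1 / 4 : ℝ) * w 0 := by
          simp only [w]
          exact le_mul_of_one_le_right (by positivity) (le_add_of_nonneg_right hw0)
    · have hd : 0 ≤ a / (q : ℝ) ^ 2 := by positivity
      calc ‖P q‖ ≤ min ε (a / (q : ℝ) ^ 2) := le_min (hPε q) (hPd q hq)
        _ ≤ ε ^ (1 / 4 : ℝ) * (a / (q : ℝ) ^ 2) ^ (1 - 1 / 4 : ℝ) :=
          min_le_rpow_mul_rpow hε0 hd (by norm_num) (by norm_num)
        _ = ε ^ (1 / 4 : ℝ) * w q := by
          simp only [w, if_neg hq, zero_add]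
          rw [← div_sq_rpow_three_div_four ha]
          norm_num
  have hsum := hw.summable.mul_left (ε ^ (1 / 4 : ℝ))
  have hP : Summable (‖P ·‖) := .of_nonneg_of_le (fun _ => norm_nonneg _) hPw hsum
  refine ⟨hP, ?_⟩
  calc ∑' q, ‖P q‖ ≤ ∑' q, ε ^ (1 / 4 : ℝ) * w q := hP.tsum_le_tsum hPw hsum
    _ = ε ^ (1 / 4 : ℝ) * l1Const a := by rw [tsum_mul_left, hw.tsum_eq]

lemma one_div_sq_le_abs_rpow_neg {x s : ℝ} (hx : 1 ≤ |x|) (hs : s ≤ 2) :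
    1 / x ^ 2 ≤ |x| ^ (-s) := by
  calc 1 / x ^ 2 = |x| ^ (-(2 : ℝ)) := by
        rw [rpow_neg (abs_nonneg _), ← sq_abs, ← rpow_natCast, one_div]; norm_num
    _ ≤ |x| ^ (-s) := rpow_le_rpow_of_exponent_le hx (by linarith)

theorem stmt4_general (a₀ : ℝ) (ha₀ : 0 < a₀) (N : ℕ) :
    ∃ ε₀ ∈ Set.Ioo (0 : ℝ) 1,
      ∀ ε : ℝ, ε ∈ Set.Ioc (0 : ℝ) ε₀ →
      ∀ P : ℤ → ℂ,
        (∀ q : ℤ, ‖P q‖ ≤ ε) →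
        (∀ q : ℤ, q ≠ 0 → ‖P q‖ ≤ a₀ / (q : ℝ) ^ 2) →
        ∀ n : ℕ, 2 ≤ n → n ≤ N →
        ∀ q : ℤ, q ≠ 0 →
          ‖Sconv P n q‖ ≤ |(q : ℝ)| ^ (-((1 : ℝ) + (4 : ℝ) ^ (-((n : ℝ) - 1)))) := by
  set r := (8 * (1 + a₀) * l1Const a₀)⁻¹
  have hC := one_le_l1Const ha₀.le
  have hr : 0 < r := by positivity
  have hr1 : r < 1 := inv_lt_one_of_one_lt₀ (by nlinarith)
  refine ⟨r ^ 4, ⟨by positivity, pow_lt_one₀ hr.le hr1 (by norm_num)⟩, ?_⟩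
  rintro ε ⟨hε, hεr⟩ P hPε hPd n hn - q hq
  obtain ⟨hP, hPL⟩ := summable_norm_and_tsum_norm_le_rpow_mul
    (hεr.trans (pow_le_one₀ hr.le hr1.le)) ha₀.le hPε hPd
  have hεr' : ε ^ (1 / 4 : ℝ) ≤ r := by
    calc ε ^ (1 / 4 : ℝ) ≤ (r ^ 4) ^ (1 / 4 : ℝ) := rpow_le_rpow hε.le hεr (by norm_num)
      _ = r := by
        rw [show (1 / 4 : ℝ) = ((4 : ℕ) : ℝ)⁻¹ by norm_num, pow_rpow_inv_natCast hr.le (by norm_num)]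
  have hL : 8 * (1 + a₀) * ∑' m, ‖P m‖ ≤ 1 := calc
    _ ≤ 8 * (1 + a₀) * (r * l1Const a₀) := by gcongr; exact hPL.trans (by gcongr)
    _ = 1 := by simp only [r]; field_simp
  have hL0 : 0 ≤ ∑' m, ‖P m‖ := tsum_nonneg fun _ => norm_nonneg _
  obtain ⟨n, rfl⟩ : ∃ m, n = m + 2 := ⟨n - 2, by omega⟩
  have hq1 : (1 : ℝ) ≤ |(q : ℝ)| := by exact_mod_cast Int.one_le_abs hq
  have h4 : (4 : ℝ) ^ (-(((n + 2 : ℕ) : ℝ) - 1)) ≤ 1 :=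
    rpow_le_one_of_one_le_of_nonpos (by norm_num) (by push_cast; linarith)
  calc ‖Sconv P (n + 2) q‖ ≤ 8 * a₀ * (∑' m, ‖P m‖) / (q : ℝ) ^ 2 :=
        norm_Sconv_add_two_le ha₀.le hP (by nlinarith) hPd n hq
    _ ≤ 1 / (q : ℝ) ^ 2 := by gcongr; nlinarith
    _ ≤ _ := one_div_sq_le_abs_rpow_neg hq1 (by linarith)

theorem stmt4 (a₀ : ℝ) (ha₀ : 0 < a₀) (N : ℕ) (hN : 2 ≤ N) :
    ∃ ε₀ ∈ Set.Ioo (0 : ℝ) 1,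
      ∀ ε : ℝ, ε ∈ Set.Ioc (0 : ℝ) ε₀ →
      ∀ P : ℤ → ℂ,
        (∀ q : ℤ, ‖P q‖ ≤ ε) →
        (∀ q : ℤ, q ≠ 0 → ‖P q‖ ≤ a₀ / (q : ℝ) ^ 2) →
        ∀ n : ℕ, 2 ≤ n → n ≤ N →
        ∀ q : ℤ, q ≠ 0 →
          ‖Sconv P n q‖ ≤ |(q : ℝ)| ^ (-((1 : ℝ) + (4 : ℝ) ^ (-((n : ℝ) - 1)))) :=
  stmt4_general a₀ ha₀ N
end

section
/- For every a₀ > 0, every c > 0, every G̃ > 0 and every integer M ≥ 2 there exists ε₀ ∈ (0,1) such that the following holds. Let Ĵ : ℤ → ℂ satisfy |Ĵ(q)| ≥ c for all q ∈ ℤ, for each 2 ≤ n ≤ M let g_n : ℤ^n → ℂ satisfy |g_n| ≤ G̃ everywhere, and let P : ℤ → ℂ satisfy |P(q)| ≤ ε₀ for all q ∈ ℤ, |P(q)| ≤ a₀/q² for all q ≠ 0, and the harmonic-balance equation Ĵ(q)·P(q) = Σ_{n=2}^{M} S(g_n,n,P)(q) for all q ∈ ℤ. Then P = 0. (Hence a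 nontrivial small periodic oscillation can exist only when the diagonal linearized operator Ĵ has a vanishing eigenvalue.) -/
/-- For `q : ℤ` and `k = (k₁, …, k_m) : Fin m → ℤ`, `diffs q k i` is the `i`-th successive
difference in the chain `q, k₁, k₂, …, k_m, 0`; i.e. `diffs q k 0 = q - k₁`,
`diffs q k i = kᵢ - k_{i+1}` for `1 ≤ i ≤ m - 1`, and `diffs q k m = k_m`. -/
def diffs (q : ℤ) {m : ℕ} (k : Fin m → ℤ) (i : ℕ) : ℤ :=
  (q :: (List.ofFn k ++ [0])).getD i 0 - (q :: (List.ofFn k ++ [0])).getD (i + 1) 0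

/-- `Sg n g P q = Σ_{k₁,…,k_{n-1} ∈ ℤ} g(q,k₁,…,k_{n-1}) · P(q-k₁)·P(k₁-k₂)⋯P(k_{n-1})`,
the convolution-type multiple series with kernel `g`. -/
noncomputable def Sg (n : ℕ) (g : (Fin n → ℤ) → ℂ) (P : ℤ → ℂ) (q : ℤ) : ℂ :=
  ∑' k : Fin (n - 1) → ℤ,
    g (fun i : Fin n => (q :: List.ofFn k).getD (i : ℕ) 0) *
      ∏ i ∈ Finset.range n, P (diffs q k i)

lemma diffs_zero' (q : ℤ) (k : Fin 0 → ℤ) : diffs q k 0 = q := by simp [diffs]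

lemma diffs_cons_zero (q a : ℤ) {m : ℕ} (t : Fin m → ℤ) :
    diffs q (Fin.cons a t) 0 = q - a := by simp [diffs, List.ofFn_succ]

lemma diffs_cons_succ (q a : ℤ) {m : ℕ} (t : Fin m → ℤ) (i : ℕ) :
    diffs q (Fin.cons a t) (i + 1) = diffs a t i := by simp [diffs, List.ofFn_succ]

lemma prod_cons_eq (P : ℤ → ℂ) (q : ℤ) {m : ℕ} (a : ℤ) (t : Fin m → ℤ) :
    (∏ i ∈ Finset.range (m + 1 + 1), ‖P (diffs q (Fin.cons a t) i)‖)
      = ‖P (q - a)‖ * ∏ i ∈ Finset.range (m + 1), ‖P (diffs a t i)‖ := by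
  rw [Finset.prod_range_succ']
  simp only [diffs_cons_succ, diffs_cons_zero]
  ring

lemma keyP (P : ℤ → ℂ) (f : ℤ → ℝ) (hfs : Summable f)
    (E : ℝ) (hE : 0 ≤ E) (hPf : ∀ q, ‖P q‖ ≤ f q) (hPE : ∀ q, ‖P q‖ ≤ E) :
    ∀ m : ℕ, ∀ q : ℤ,
      Summable (fun k : Fin m → ℤ => ∏ i ∈ Finset.range (m + 1), ‖P (diffs q k i)‖) ∧
      ∑' k : Fin m → ℤ, ∏ i ∈ Finset.range (m + 1), ‖P (diffs q k i)‖
        ≤ E * (∑' x, f x) ^ m := by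
  have hf0 : ∀ q, 0 ≤ f q := fun q => (norm_nonneg _).trans (hPf q)
  have hA0 : 0 ≤ ∑' x, f x := tsum_nonneg hf0
  intro m
  induction m with
  | zero =>
    intro q
    have he : (fun k : Fin 0 → ℤ => ∏ i ∈ Finset.range 1, ‖P (diffs q k i)‖)
        = fun _ : Fin 0 → ℤ => ‖P q‖ := by
      funext k; rw [Finset.prod_range_one, diffs_zero']
    rw [he]
    refine ⟨Summable.of_finite, ?_⟩
    rw [tsum_eq_single (default : Fin 0 → ℤ)
      (fun b hb => absurd (Subsingleton.elim b default) hb)]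
    simpa using hPE q
  | succ m ih =>
    intro q
    have hH0 : ∀ (a : ℤ) (t : Fin m → ℤ),
        0 ≤ ‖P (q - a)‖ * ∏ i ∈ Finset.range (m + 1), ‖P (diffs a t i)‖ :=
      fun a t => mul_nonneg (norm_nonneg _)
        (Finset.prod_nonneg fun _ _ => norm_nonneg _)
    have hfibsum : ∀ a : ℤ, Summable fun t : Fin m → ℤ =>
        ‖P (q - a)‖ * ∏ i ∈ Finset.range (m + 1), ‖P (diffs a t i)‖ :=
      fun a => ((ih a).1.mul_left _)
    have hfib_tsum : ∀ a : ℤ,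
        (∑' t : Fin m → ℤ, ‖P (q - a)‖ * ∏ i ∈ Finset.range (m + 1), ‖P (diffs a t i)‖)
        = ‖P (q - a)‖ * ∑' t : Fin m → ℤ, ∏ i ∈ Finset.range (m + 1), ‖P (diffs a t i)‖ :=
      fun a => tsum_mul_left
    have hmaj : Summable fun a : ℤ => f (q - a) * (E * (∑' x, f x) ^ m) := by
      have h1 : Summable fun a : ℤ => f (q - a) := (Equiv.subLeft q).summable_iff.2 hfs
      exact h1.mul_right _
    have hle : ∀ a : ℤ,
        (∑' t : Fin m → ℤ, ‖P (q - a)‖ * ∏ i ∈ Finset.range (m + 1), ‖P (diffs a t i)‖)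
          ≤ f (q - a) * (E * (∑' x, f x) ^ m) := by
      intro a
      rw [hfib_tsum a]
      exact mul_le_mul (hPf _) ((ih a).2) (tsum_nonneg fun _ =>
        Finset.prod_nonneg fun _ _ => norm_nonneg _) (hf0 _)
    have hsums : Summable fun a : ℤ =>
        ∑' t : Fin m → ℤ, ‖P (q - a)‖ * ∏ i ∈ Finset.range (m + 1), ‖P (diffs a t i)‖ :=
      Summable.of_nonneg_of_le (fun a => tsum_nonneg fun t => hH0 a t) hle hmaj
    have hHsum : Summable fun p : ℤ × (Fin m → ℤ) =>
        ‖P (q - p.1)‖ * ∏ i ∈ Finset.range (m + 1), ‖P (diffs p.1 p.2 i)‖ :=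
      (summable_prod_of_nonneg (fun p => hH0 p.1 p.2)).2 ⟨hfibsum, hsums⟩
    have hcomp : ((fun k : Fin (m + 1) → ℤ =>
          ∏ i ∈ Finset.range (m + 1 + 1), ‖P (diffs q k i)‖)
        ∘ ⇑(Fin.consEquiv (fun _ : Fin (m + 1) => ℤ)))
        = fun p : ℤ × (Fin m → ℤ) =>
          ‖P (q - p.1)‖ * ∏ i ∈ Finset.range (m + 1), ‖P (diffs p.1 p.2 i)‖ := by
      funext p
      obtain ⟨a, t⟩ := p
      have hpt : (Fin.consEquiv (fun _ : Fin (m + 1) => ℤ)) (a, t) = Fin.cons a t := rfl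
      show (∏ i ∈ Finset.range (m + 1 + 1),
          ‖P (diffs q ((Fin.consEquiv (fun _ : Fin (m + 1) => ℤ)) (a, t)) i)‖) = _
      rw [hpt, prod_cons_eq]
    have hGsum : Summable (fun k : Fin (m + 1) → ℤ =>
        ∏ i ∈ Finset.range (m + 1 + 1), ‖P (diffs q k i)‖) := by
      refine (Fin.consEquiv (fun _ : Fin (m + 1) => ℤ)).summable_iff.1 ?_
      rw [hcomp]
      exact hHsum
    refine ⟨hGsum, ?_⟩
    have h1 : (∑' k : Fin (m + 1) → ℤ, ∏ i ∈ Finset.range (m + 1 + 1), ‖P (diffs q k i)‖)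
        = ∑' p : ℤ × (Fin m → ℤ),
            ‖P (q - p.1)‖ * ∏ i ∈ Finset.range (m + 1), ‖P (diffs p.1 p.2 i)‖ := by
      rw [← (Fin.consEquiv (fun _ : Fin (m + 1) => ℤ)).tsum_eq
        (fun k : Fin (m + 1) → ℤ => ∏ i ∈ Finset.range (m + 1 + 1), ‖P (diffs q k i)‖)]
      exact tsum_congr (fun p => congrFun hcomp p)
    have h2 : (∑' p : ℤ × (Fin m → ℤ),
          ‖P (q - p.1)‖ * ∏ i ∈ Finset.range (m + 1), ‖P (diffs p.1 p.2 i)‖)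
        = ∑' a : ℤ, ∑' t : Fin m → ℤ,
            ‖P (q - a)‖ * ∏ i ∈ Finset.range (m + 1), ‖P (diffs a t i)‖ :=
      Summable.tsum_prod' hHsum hfibsum
    calc (∑' k : Fin (m + 1) → ℤ, ∏ i ∈ Finset.range (m + 1 + 1), ‖P (diffs q k i)‖)
        = ∑' a : ℤ, ∑' t : Fin m → ℤ,
            ‖P (q - a)‖ * ∏ i ∈ Finset.range (m + 1), ‖P (diffs a t i)‖ := by rw [h1, h2]
      _ ≤ ∑' a : ℤ, f (q - a) * (E * (∑' x, f x) ^ m) := Summable.tsum_le_tsum hle hsums hmaj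
      _ = (∑' a : ℤ, f (q - a)) * (E * (∑' x, f x) ^ m) := tsum_mul_right
      _ = (∑' x, f x) * (E * (∑' x, f x) ^ m) := by
          rw [show (∑' a : ℤ, f (q - a)) = ∑' x, f x from (Equiv.subLeft q).tsum_eq f]
      _ = E * (∑' x, f x) ^ (m + 1) := by ring

set_option maxHeartbeats 1600000 in
theorem stmt9 (a₀ c Gb : ℝ) (ha₀ : 0 < a₀) (hc : 0 < c) (hGb : 0 < Gb)
    (M : ℕ) (hM : 2 ≤ M) :
    ∃ ε₀ ∈ Set.Ioo (0 : ℝ) 1,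
      ∀ J : ℤ → ℂ, (∀ q : ℤ, c ≤ ‖J q‖) →
      ∀ g : (n : ℕ) → (Fin n → ℤ) → ℂ,
        (∀ n : ℕ, 2 ≤ n → n ≤ M → ∀ v : Fin n → ℤ, ‖g n v‖ ≤ Gb) →
      ∀ P : ℤ → ℂ,
        (∀ q : ℤ, ‖P q‖ ≤ ε₀) →
        (∀ q : ℤ, q ≠ 0 → ‖P q‖ ≤ a₀ / (q : ℝ) ^ 2) →
        (∀ q : ℤ, J q * P q = ∑ n ∈ Finset.Icc 2 M, Sg n (g n) P q) →
        P = 0 := by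
  have hM1 : (1 : ℝ) ≤ (M : ℝ) - 1 := by
    have : (2 : ℝ) ≤ (M : ℝ) := by exact_mod_cast hM
    linarith
  set δ : ℝ := min 1 (c / (2 * Gb * ((M : ℝ) - 1))) with hδdef
  have hδpos : 0 < δ := by
    apply lt_min one_pos
    positivity
  have hδ1 : δ ≤ 1 := min_le_left _ _
  have hδc : δ ≤ c / (2 * Gb * ((M : ℝ) - 1)) := min_le_right _ _
  -- tail of the decay majorant
  set u : ℤ → ℝ := fun q => a₀ / (q : ℝ) ^ 2 with hu_def
  have hu0 : ∀ q, 0 ≤ u q := fun q => by positivity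
  have hus : Summable u := by
    have h := (Real.summable_one_div_int_pow (p := 2)).2 one_lt_two
    simpa [hu_def, div_eq_mul_inv, one_div] using h.mul_left a₀
  obtain ⟨s₀, hs₀⟩ := Filter.eventually_atTop.1
    ((tendsto_tsum_compl_atTop_zero u).eventually_lt_const
      (show (0 : ℝ) < δ / 2 by positivity))
  set s : Finset ℤ := insert 0 s₀ with hs_def
  have h0s : (0 : ℤ) ∈ s := Finset.mem_insert_self _ _
  have htail : ∑' x : {x : ℤ // x ∉ s}, u x < δ / 2 :=
    hs₀ s (Finset.le_iff_subset.2 (Finset.subset_insert _ _))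
  set ε₀ : ℝ := min (1 / 2) (δ / (2 * (s.card + 1))) with hε₀def
  have hcard0 : (0 : ℝ) ≤ (s.card : ℝ) := Nat.cast_nonneg _
  have hε₀pos : 0 < ε₀ := by
    apply lt_min (by norm_num)
    positivity
  have hε₀1 : ε₀ < 1 := lt_of_le_of_lt (min_le_left _ _) (by norm_num)
  have hε₀card : ε₀ ≤ δ / (2 * (s.card + 1)) := min_le_right _ _
  refine ⟨ε₀, ⟨hε₀pos, hε₀1⟩, ?_⟩
  intro J hJ g hg P hPε hPd hHB
  -- the summable majorant f of ‖P‖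
  set f : ℤ → ℝ := fun q => if q = 0 then ε₀ else min ε₀ (a₀ / (q : ℝ) ^ 2) with hf_def
  have hPf : ∀ q, ‖P q‖ ≤ f q := by
    intro q
    by_cases hq : q = 0
    · simp [hf_def, hq]; exact hPε 0
    · simp only [hf_def, hq, if_false, le_min_iff]
      exact ⟨hPε q, hPd q hq⟩
  have hf0 : ∀ q, 0 ≤ f q := fun q => (norm_nonneg _).trans (hPf q)
  have hfε : ∀ q, f q ≤ ε₀ := by
    intro q
    by_cases hq : q = 0 <;> simp [hf_def, hq, min_le_left]
  have hfs : Summable f := by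
    refine Summable.of_nonneg_of_le hf0 (f := fun q => (if q = 0 then ε₀ else 0) + u q) ?_ ?_
    · intro q
      by_cases hq : q = 0
      · simp [hf_def, hq, hu0 q]
        exact hu0 0
      · simp only [hf_def, hq, if_false, zero_add]
        exact min_le_right _ _
    · refine Summable.add ?_ hus
      apply summable_of_ne_finset_zero (s := ({0} : Finset ℤ))
      intro b hb
      simp only [Finset.mem_singleton] at hb
      simp [hb]
  set A : ℝ := ∑' x, f x with hA_def
  have hA0 : 0 ≤ A := tsum_nonneg hf0
  -- A < δ
  have hg1s : Summable (fun q : ℤ => if q ∈ s then ε₀ else 0) := by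
    apply summable_of_ne_finset_zero (s := s)
    intro b hb; simp [hb]
  have hg2s : Summable ({x : ℤ | x ∉ s}.indicator u) := hus.indicator _
  have hAle : A ≤ s.card * ε₀ + ∑' x : {x : ℤ // x ∉ s}, u x := by
    have hsum_le : A ≤ ∑' q : ℤ, ((if q ∈ s then ε₀ else 0) + {x : ℤ | x ∉ s}.indicator u q) := by
      apply Summable.tsum_le_tsum _ hfs (hg1s.add hg2s)
      intro q
      by_cases hq : q ∈ s
      · have : {x : ℤ | x ∉ s}.indicator u q = 0 := by
          apply Set.indicator_of_notMem; simp [hq]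
        rw [this, if_pos hq, add_zero]
        exact hfε q
      · have hq0 : q ≠ 0 := fun h => hq (h ▸ h0s)
        have : {x : ℤ | x ∉ s}.indicator u q = u q :=
          Set.indicator_of_mem (show q ∈ {x : ℤ | x ∉ s} from hq) u
        rw [this, if_neg hq, zero_add]
        simp only [hf_def, hq0, if_false]
        exact min_le_right _ _
    have h1 : ∑' q : ℤ, (if q ∈ s then ε₀ else 0) = s.card * ε₀ := by
      rw [tsum_eq_sum (s := s) (fun b hb => by simp [hb])]
      simp [Finset.sum_ite_mem, mul_comm]
    have h2 : ∑' q : ℤ, {x : ℤ | x ∉ s}.indicator u q = ∑' x : {x : ℤ // x ∉ s}, u x :=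
      (tsum_subtype {x : ℤ | x ∉ s} u).symm
    calc A ≤ _ := hsum_le
      _ = s.card * ε₀ + ∑' x : {x : ℤ // x ∉ s}, u x := by
          rw [Summable.tsum_add hg1s hg2s, h1, h2]
  have hAδ : A < δ := by
    have hcard : (s.card : ℝ) * ε₀ ≤ δ / 2 := by
      have h1 : (s.card : ℝ) * ε₀ ≤ (s.card : ℝ) * (δ / (2 * (s.card + 1))) :=
        mul_le_mul_of_nonneg_left hε₀card hcard0
      have h2 : (s.card : ℝ) * (δ / (2 * (s.card + 1))) ≤ δ / 2 := by
        rw [← mul_div_assoc, div_le_div_iff₀ (by positivity) (by norm_num : (0:ℝ) < 2)]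
        nlinarith [hδpos.le, hcard0]
      linarith
    linarith
  have hA1 : A ≤ 1 := le_of_lt (lt_of_lt_of_le hAδ hδ1)
  -- sup of ‖P‖
  set E : ℝ := sSup (Set.range fun q : ℤ => ‖P q‖) with hE_def
  have hbdd : BddAbove (Set.range fun q : ℤ => ‖P q‖) := by
    refine ⟨ε₀, ?_⟩
    rintro _ ⟨q, rfl⟩
    exact hPε q
  have hPE : ∀ q, ‖P q‖ ≤ E := fun q => le_csSup hbdd ⟨q, rfl⟩
  have hE0 : 0 ≤ E := (norm_nonneg _).trans (hPE 0)
  have key := keyP P f hfs E hE0 hPf hPE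
  -- per-term bound on Sg
  have hSg : ∀ n ∈ Finset.Icc 2 M, ∀ q : ℤ, ‖Sg n (g n) P q‖ ≤ Gb * (E * A) := by
    intro n hn q
    simp only [Finset.mem_Icc] at hn
    obtain ⟨m, rfl⟩ : ∃ m, n = m + 2 := ⟨n - 2, by omega⟩
    have hkey := key (m + 1) q
    have hB : Summable (fun k : Fin (m + 1) → ℤ =>
        Gb * ∏ i ∈ Finset.range (m + 2), ‖P (diffs q k i)‖) := hkey.1.mul_left Gb
    have hSgle : ‖Sg (m + 2) (g (m + 2)) P q‖ ≤
        Gb * ∑' k : Fin (m + 1) → ℤ, ∏ i ∈ Finset.range (m + 2), ‖P (diffs q k i)‖ := by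
      have hhs : HasSum (fun k : Fin (m + 1) → ℤ =>
          Gb * ∏ i ∈ Finset.range (m + 2), ‖P (diffs q k i)‖)
          (Gb * ∑' k : Fin (m + 1) → ℤ, ∏ i ∈ Finset.range (m + 2), ‖P (diffs q k i)‖) :=
        hkey.1.hasSum.mul_left Gb
      refine tsum_of_norm_bounded hhs ?_
      intro k
      rw [norm_mul, norm_prod]
      refine mul_le_mul_of_nonneg_right (hg (m + 2) (by omega) (by omega) _) ?_
      exact Finset.prod_nonneg fun _ _ => norm_nonneg _
    have hpow : A ^ (m + 1) ≤ A := pow_le_of_le_one hA0 hA1 (by omega)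
    calc ‖Sg (m + 2) (g (m + 2)) P q‖
        ≤ Gb * ∑' k : Fin (m + 1) → ℤ, ∏ i ∈ Finset.range (m + 2), ‖P (diffs q k i)‖ := hSgle
      _ ≤ Gb * (E * A ^ (m + 1)) := mul_le_mul_of_nonneg_left hkey.2 hGb.le
      _ ≤ Gb * (E * A) := by
          refine mul_le_mul_of_nonneg_left (mul_le_mul_of_nonneg_left hpow hE0) hGb.le
  -- main per-q estimate
  have hmain : ∀ q : ℤ, ‖P q‖ ≤ E / 2 := by
    intro q
    have h1 : c * ‖P q‖ ≤ ‖J q * P q‖ := by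
      rw [norm_mul]
      exact mul_le_mul_of_nonneg_right (hJ q) (norm_nonneg _)
    have h2 : ‖J q * P q‖ ≤ ∑ n ∈ Finset.Icc 2 M, ‖Sg n (g n) P q‖ := by
      rw [hHB q]; exact norm_sum_le _ _
    have h3 : ∑ n ∈ Finset.Icc 2 M, ‖Sg n (g n) P q‖ ≤
        ((M : ℝ) - 1) * (Gb * (E * A)) := by
      calc ∑ n ∈ Finset.Icc 2 M, ‖Sg n (g n) P q‖
          ≤ ∑ _n ∈ Finset.Icc 2 M, Gb * (E * A) := Finset.sum_le_sum (fun n hn => hSg n hn q)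
        _ = ((Finset.Icc 2 M).card : ℝ) * (Gb * (E * A)) := by
            rw [Finset.sum_const, nsmul_eq_mul]
        _ = ((M : ℝ) - 1) * (Gb * (E * A)) := by
            rw [Nat.card_Icc]
            congr 1
            have : M + 1 - 2 = M - 1 := by omega
            rw [this]
            have : (1 : ℕ) ≤ M := by omega
            push_cast [this]
            ring
    -- now combine
    have hAc : A ≤ c / (2 * Gb * ((M : ℝ) - 1)) := le_trans hAδ.le hδc
    have hA2 : ((M : ℝ) - 1) * Gb * A ≤ c / 2 := by
      rw [le_div_iff₀ (by positivity)] at hAc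
      nlinarith
    have hfinal : c * ‖P q‖ ≤ (c / 2) * E := by
      have hchain : c * ‖P q‖ ≤ ((M : ℝ) - 1) * (Gb * (E * A)) := le_trans h1 (le_trans h2 h3)
      have : ((M : ℝ) - 1) * (Gb * (E * A)) = (((M : ℝ) - 1) * Gb * A) * E := by ring
      rw [this] at hchain
      exact le_trans hchain (mul_le_mul_of_nonneg_right hA2 hE0)
    nlinarith [hfinal]
  have hE2 : E ≤ E / 2 := by
    refine csSup_le ⟨‖P 0‖, ⟨0, rfl⟩⟩ ?_
    rintro _ ⟨q, rfl⟩
    exact hmain q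
  have hEle0 : E ≤ 0 := by linarith
  funext q
  have h0 : ‖P q‖ ≤ 0 := le_trans (hmain q) (by linarith)
  have : P q = 0 := norm_le_zero_iff.1 h0
  simpa using this
end

section
/- For every a₀ > 0, every c > 0, every G̃ > 0 and every integer M ≥ 2 there exists ε₀ ∈ (0,1) such that the following holds. Let e be an integer with e ≥ 1, let Ĵ : ℤ → ℂ satisfy |Ĵ(q)| ≥ c for all q ∉ {e, −e}, for each 2 ≤ n ≤ M let g_n : ℤ^n → ℂ satisfy |g_n| ≤ G̃ everywhere, and let P : ℤ → ℂ satisfy P(−q) = conj(P(q)) for all q ∈ ℤ, |P(q)| ≤ ε₀ for all q ∈ ℤ, |P(q)| ≤ a₀/q² for all q ≠ 0, and the harmonic-balance equation Ĵ(q)·P(q) = Σ_{n=2}^{M} S(g_n,n,P)(q) for all q ∉ {e, −e}. Then P(β) = 0 for every β ∈ ℤ that is not an integer multiple of e; i.e., only harmonics at frequencies that are multiples of the fundamental e can be nonzero. -/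
/-!
Write `H = eℤ` and let `B` bound `|P|` off `H`. In each term of `S(g_n,n,P)(q)` with `q ∉ H`
the `n` arguments of `P` sum to `q`, so one of them lies outside `H` and that factor is at most `B`;
summing the other `n - 1` factors freely gives `(Σ_z |P(z)|)^{n-1} ≤ Σ_z |P(z)| ≤ 1`.
The harmonic balance equation therefore turns `B` into the better bound `r B`, where
`r = Gb (Σ_{n=2}^M n) (Σ_z |P(z)|) / c`, and `Σ_z |P(z)| ≤ Σ_z min(ε₀, a₀/z²)` makes `r < 1` for
small `ε₀` by dominated convergence. Iterating, `|P| ≤ rᵏ ε₀ → 0` off `H`.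
-/

open Filter Topology Finset

theorem getD_cons_ofFn_append_succ_of_lt (q : ℤ) {m : ℕ} (k : Fin m → ℤ) {t : ℕ} (ht : t < m) :
    (q :: (List.ofFn k ++ [0])).getD (t + 1) 0 = k ⟨t, ht⟩ := by
  simp [List.getElem?_append_left, ht]

theorem getD_cons_ofFn_append_succ_self (q : ℤ) {m : ℕ} (k : Fin m → ℤ) :
    (q :: (List.ofFn k ++ [0])).getD (m + 1) 0 = 0 := by
  simp

theorem sum_range_diffs (q : ℤ) {m : ℕ} (k : Fin m → ℤ) (r : ℕ) :
    ∑ i ∈ range r, diffs q k i = q - (q :: (List.ofFn k ++ [0])).getD r 0 :=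
  sum_range_sub' (fun i => (q :: (List.ofFn k ++ [0])).getD i 0) r

theorem sum_diffs (q : ℤ) {m : ℕ} (k : Fin m → ℤ) : ∑ i ∈ range (m + 1), diffs q k i = q := by
  rw [sum_range_diffs, getD_cons_ofFn_append_succ_self, sub_zero]

theorem eq_sub_sum_diffs (q : ℤ) {m : ℕ} (k : Fin m → ℤ) (t : Fin m) :
    k t = q - ∑ i ∈ range (t + 1), diffs q k i := by
  rw [sum_range_diffs, getD_cons_ofFn_append_succ_of_lt q k t.isLt, sub_sub_cancel]

theorem eq_of_diffs_eq_on_erase {q : ℤ} {m i : ℕ} (hi : i ∈ range (m + 1)) {k k' : Fin m → ℤ}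
    (h : ∀ j ∈ (range (m + 1)).erase i, diffs q k j = diffs q k' j) : k = k' := by
  have hsum := (sum_diffs q k).trans (sum_diffs q k').symm
  rw [← add_sum_erase _ (diffs q k) hi, ← add_sum_erase _ (diffs q k') hi, sum_congr rfl h]
    at hsum
  have hall : ∀ j ∈ range (m + 1), diffs q k j = diffs q k' j := fun j hj => by
    by_cases hji : j = i
    · subst hji
      exact add_right_cancel hsum
    · exact h j (mem_erase.2 ⟨hji, hj⟩)
  funext t
  rw [eq_sub_sum_diffs q k, eq_sub_sum_diffs q k']
  exact congrArg _ (sum_congr rfl fun j hj =>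
    hall j (range_subset_range.2 (by omega : (t : ℕ) + 1 ≤ m + 1) hj))

theorem sum_prod_le_tsum_pow {ι α : Type*} [Fintype ι] {w : α → ℝ} (hw0 : 0 ≤ w)
    (hw : Summable w) (t : Finset (ι → α)) :
    ∑ y ∈ t, ∏ i, w (y i) ≤ (∑' a, w a) ^ Fintype.card ι := by
  classical
  calc ∑ y ∈ t, ∏ i, w (y i)
      ≤ ∑ y ∈ Fintype.piFinset fun i => t.image (· i), ∏ i, w (y i) :=
        sum_le_sum_of_subset_of_nonneg
          (fun y hy => Fintype.mem_piFinset.2 fun i => mem_image_of_mem _ hy)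
          fun y _ _ => prod_nonneg fun i _ => hw0 _
    _ = ∏ i, ∑ a ∈ t.image (· i), w a := (prod_univ_sum _ _).symm
    _ ≤ ∏ _i : ι, ∑' a, w a :=
        prod_le_prod (fun i _ => sum_nonneg fun a _ => hw0 a)
          fun i _ => hw.sum_le_tsum _ fun a _ => hw0 a
    _ = (∑' a, w a) ^ Fintype.card ι := by rw [prod_const, card_univ]

theorem sum_prod_diffs_erase_le {w : ℤ → ℝ} (hw0 : 0 ≤ w) (hw : Summable w) (q : ℤ)
    {m i : ℕ} (hi : i ∈ range (m + 1)) (s : Finset (Fin m → ℤ)) :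
    ∑ k ∈ s, ∏ j ∈ (range (m + 1)).erase i, w (diffs q k j) ≤ (∑' z, w z) ^ m := by
  classical
  set E := (range (m + 1)).erase i
  let ψ : (Fin m → ℤ) → E → ℤ := fun k j => diffs q k j
  have hψ : Set.InjOn ψ s := fun k _ k' _ h =>
    eq_of_diffs_eq_on_erase hi fun j hj => congrFun h ⟨j, hj⟩
  have hcard : Fintype.card E = m := by simp [E, card_erase_of_mem hi]
  calc ∑ k ∈ s, ∏ j ∈ E, w (diffs q k j) = ∑ k ∈ s, ∏ j : E, w (ψ k j) :=
        sum_congr rfl fun k _ => (prod_coe_sort E _).symm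
    _ = ∑ y ∈ s.image ψ, ∏ j : E, w (y j) := (sum_image (f := fun y => ∏ j, w (y j)) hψ).symm
    _ ≤ (∑' z, w z) ^ Fintype.card E := sum_prod_le_tsum_pow hw0 hw _
    _ = (∑' z, w z) ^ m := by rw [hcard]

/-- Since the differences sum to `q ∉ H`, one of them lies outside `H`. -/
theorem prod_norm_diffs_le {H : AddSubgroup ℤ} {q : ℤ} (hq : q ∉ H) {P : ℤ → ℂ} {B : ℝ}
    (hPB : ∀ z ∉ H, ‖P z‖ ≤ B) {m : ℕ} (k : Fin m → ℤ) :
    ∏ i ∈ range (m + 1), ‖P (diffs q k i)‖ ≤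
      B * ∑ i ∈ range (m + 1), ∏ j ∈ (range (m + 1)).erase i, ‖P (diffs q k j)‖ := by
  obtain ⟨i, hi, hiH⟩ : ∃ i ∈ range (m + 1), diffs q k i ∉ H := by
    by_contra! h
    exact hq (sum_diffs q k ▸ H.sum_mem h)
  have hB : 0 ≤ B := (norm_nonneg _).trans (hPB _ hiH)
  rw [← mul_prod_erase _ _ hi]
  gcongr
  · exact hPB _ hiH
  · exact single_le_sum (f := fun i => ∏ j ∈ (range (m + 1)).erase i, ‖P (diffs q k j)‖)
      (fun _ _ => prod_nonneg fun _ _ => norm_nonneg _) hi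

theorem norm_Sg_le {H : AddSubgroup ℤ} {q : ℤ} (hq : q ∉ H) {P : ℤ → ℂ}
    (hP : Summable (‖P ·‖)) {B : ℝ} (hPB : ∀ z ∉ H, ‖P z‖ ≤ B) {m : ℕ}
    {g : (Fin (m + 1) → ℤ) → ℂ} {Gb : ℝ} (hg : ∀ v, ‖g v‖ ≤ Gb) :
    ‖Sg (m + 1) g P q‖ ≤ Gb * B * ((m + 1 : ℕ) * (∑' z, ‖P z‖) ^ m) := by
  have hGb : 0 ≤ Gb := (norm_nonneg _).trans (hg 0)
  have hB : 0 ≤ B := (norm_nonneg _).trans (hPB q hq)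
  set term : (Fin m → ℤ) → ℂ := fun k =>
    g (fun i : Fin (m + 1) => (q :: List.ofFn k).getD i 0) *
      ∏ i ∈ range (m + 1), P (diffs q k i)
  set R : (Fin m → ℤ) → ℕ → ℝ := fun k i => ∏ j ∈ (range (m + 1)).erase i, ‖P (diffs q k j)‖
  have hterm : ∀ k, ‖term k‖ ≤ Gb * B * ∑ i ∈ range (m + 1), R k i := fun k => by
    rw [norm_mul, norm_prod, mul_assoc]
    exact mul_le_mul (hg _) (prod_norm_diffs_le hq hPB k)
      (prod_nonneg fun _ _ => norm_nonneg _) hGb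
  have hpartial : ∀ s, ∑ k ∈ s, ‖term k‖ ≤ Gb * B * ((m + 1 : ℕ) * (∑' z, ‖P z‖) ^ m) :=
    fun s => calc
      ∑ k ∈ s, ‖term k‖ ≤ ∑ k ∈ s, Gb * B * ∑ i ∈ range (m + 1), R k i :=
          sum_le_sum fun k _ => hterm k
      _ = Gb * B * ∑ i ∈ range (m + 1), ∑ k ∈ s, R k i := by rw [← mul_sum, sum_comm]
      _ ≤ Gb * B * ∑ _i ∈ range (m + 1), (∑' z, ‖P z‖) ^ m :=
          mul_le_mul_of_nonneg_left
            (sum_le_sum fun i hi => sum_prod_diffs_erase_le (fun _ => norm_nonneg _) hP q hi s)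
            (mul_nonneg hGb hB)
      _ = Gb * B * ((m + 1 : ℕ) * (∑' z, ‖P z‖) ^ m) := by rw [sum_const, card_range, nsmul_eq_mul]
  calc ‖Sg (m + 1) g P q‖ = ‖∑' k, term k‖ := rfl
    _ ≤ ∑' k, ‖term k‖ :=
        norm_tsum_le_tsum_norm (summable_of_sum_le (fun _ => norm_nonneg _) hpartial)
    _ ≤ Gb * B * ((m + 1 : ℕ) * (∑' z, ‖P z‖) ^ m) :=
        Real.tsum_le_of_sum_le (fun _ => norm_nonneg _) hpartial

theorem norm_sum_Sg_le {H : AddSubgroup ℤ} {q : ℤ} (hq : q ∉ H) {P : ℤ → ℂ}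
    (hP : Summable (‖P ·‖)) (hP1 : ∑' z, ‖P z‖ ≤ 1) {B : ℝ} (hPB : ∀ z ∉ H, ‖P z‖ ≤ B)
    {M : ℕ} {g : (n : ℕ) → (Fin n → ℤ) → ℂ} {Gb : ℝ}
    (hg : ∀ n ∈ Icc 2 M, ∀ v, ‖g n v‖ ≤ Gb) :
    ‖∑ n ∈ Icc 2 M, Sg n (g n) P q‖ ≤ Gb * (∑ n ∈ Icc 2 M, (n : ℝ)) * (∑' z, ‖P z‖) * B := by
  have hA0 : 0 ≤ ∑' z, ‖P z‖ := tsum_nonneg fun _ => norm_nonneg _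
  have hB : 0 ≤ B := (norm_nonneg _).trans (hPB q hq)
  calc ‖∑ n ∈ Icc 2 M, Sg n (g n) P q‖ ≤ ∑ n ∈ Icc 2 M, ‖Sg n (g n) P q‖ := norm_sum_le _ _
    _ ≤ ∑ n ∈ Icc 2 M, Gb * B * ((n : ℝ) * ∑' z, ‖P z‖) := sum_le_sum fun n hn => by
        obtain ⟨m, rfl⟩ : ∃ m, n = m + 1 := ⟨n - 1, by grind⟩
        have hGb : 0 ≤ Gb := (norm_nonneg _).trans (hg _ hn 0)
        grw [norm_Sg_le hq hP hPB (hg _ hn), pow_le_of_le_one hA0 hP1 (by grind)]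
    _ = Gb * (∑ n ∈ Icc 2 M, (n : ℝ)) * (∑' z, ‖P z‖) * B := by
        rw [← mul_sum, ← sum_mul]; ring

theorem tendsto_tsum_min_nhdsGT_zero {ι : Type*} {u : ι → ℝ} (hu0 : 0 ≤ u) (hu : Summable u) :
    Tendsto (fun ε => ∑' i, min ε (u i)) (𝓝[>] 0) (𝓝 0) := by
  have hmin : ∀ i, Tendsto (fun ε => min ε (u i)) (𝓝[>] 0) (𝓝 0) := fun i => by
    have h : Tendsto (fun ε => min ε (u i)) (𝓝 0) (𝓝 (min 0 (u i))) :=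
      (continuous_id.min continuous_const).tendsto 0
    rw [min_eq_left (show (0 : ℝ) ≤ u i from hu0 i)] at h
    exact h.mono_left nhdsWithin_le_nhds
  have hbound : ∀ᶠ ε in 𝓝[>] (0 : ℝ), ∀ i, ‖min ε (u i)‖ ≤ u i := by
    filter_upwards [self_mem_nhdsWithin] with ε hε i
    rw [Real.norm_of_nonneg (le_min (le_of_lt hε) (hu0 i))]
    exact min_le_right _ _
  simpa using tendsto_tsum_of_dominated_convergence hu hmin hbound

theorem eq_zero_of_forall_bound_imp_norm_le_mul {ι E : Type*} [NormedAddCommGroup E] {S : Set ι}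
    {f : ι → E} {r C : ℝ} (hr0 : 0 ≤ r) (hr1 : r < 1) (hC : ∀ z ∈ S, ‖f z‖ ≤ C)
    (h : ∀ B, (∀ z ∈ S, ‖f z‖ ≤ B) → ∀ z ∈ S, ‖f z‖ ≤ r * B) : ∀ z ∈ S, f z = 0 := by
  have hpow : ∀ n : ℕ, ∀ z ∈ S, ‖f z‖ ≤ r ^ n * C := fun n => by
    induction n with
    | zero => simpa using hC
    | succ n ih => simpa only [pow_succ', mul_assoc] using h _ ih
  intro z hz
  have hlim : Tendsto (fun n : ℕ => r ^ n * C) atTop (𝓝 0) := by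
    simpa using (tendsto_pow_atTop_nhds_zero_of_lt_one hr0 hr1).mul_const C
  exact norm_le_zero_iff.1 (ge_of_tendsto' hlim fun n => hpow n z hz)

theorem exists_tsum_min_le_one_and_mul_lt {ι : Type*} {u : ι → ℝ} (hu0 : 0 ≤ u)
    (hu : Summable u) (K : ℝ) {c : ℝ} (hc : 0 < c) :
    ∃ ε ∈ Set.Ioo (0 : ℝ) 1, ∑' i, min ε (u i) ≤ 1 ∧ K * ∑' i, min ε (u i) < c := by
  have hsmall := tendsto_tsum_min_nhdsGT_zero hu0 hu
  obtain ⟨ε, ⟨⟨hε1, hA1⟩, hKA⟩, hε0⟩ :=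
    ((((eventually_lt_nhds one_pos).filter_mono nhdsWithin_le_nhds).and
      (hsmall.eventually (eventually_le_nhds one_pos))).and
      ((hsmall.const_mul K).eventually (eventually_lt_nhds (show K * 0 < c by rwa [mul_zero])))).and
      self_mem_nhdsWithin |>.exists
  exact ⟨ε, ⟨hε0, hε1⟩, hA1, hKA⟩

/-- The value `1` at `0`, which dominates `‖P 0‖ ≤ ε₀ < 1`, replaces the junk `a / 0 ^ 2 = 0`. -/
noncomputable def invSqMajorant (a : ℝ) : ℤ → ℝ :=
  Function.update (fun z => a / (z : ℝ) ^ 2) 0 1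

theorem invSqMajorant_nonneg {a : ℝ} (ha : 0 ≤ a) : 0 ≤ invSqMajorant a := fun z => by
  rcases eq_or_ne z 0 with rfl | hz
  · simp [invSqMajorant]
  · simpa [invSqMajorant, hz] using div_nonneg ha (sq_nonneg (z : ℝ))

theorem summable_invSqMajorant (a : ℝ) : Summable (invSqMajorant a) := by
  have h := ((Real.summable_one_div_int_pow.2 one_lt_two).mul_left a).update (0 : ℤ) (1 : ℝ)
  simp only [mul_one_div] at h
  exact h

theorem norm_le_min_invSqMajorant {E : Type*} [Norm E] {f : ℤ → E} {a ε : ℝ} (hε : ε ≤ 1)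
    (hfε : ∀ z, ‖f z‖ ≤ ε) (hfa : ∀ z, z ≠ 0 → ‖f z‖ ≤ a / (z : ℝ) ^ 2) (z : ℤ) :
    ‖f z‖ ≤ min ε (invSqMajorant a z) := by
  rcases eq_or_ne z 0 with rfl | hz
  · simpa [invSqMajorant, hε] using hfε 0
  · simpa [invSqMajorant, hz] using ⟨hfε z, hfa z hz⟩

theorem norm_le_div_mul_of_harmonicBalance {H : AddSubgroup ℤ} {e : ℤ} (he : e ∈ H) {c : ℝ}
    (hc : 0 < c) {J : ℤ → ℂ} (hJ : ∀ q, q ≠ e → q ≠ -e → c ≤ ‖J q‖) {M : ℕ}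
    {g : (n : ℕ) → (Fin n → ℤ) → ℂ} {Gb : ℝ}
    (hg : ∀ n, 2 ≤ n → n ≤ M → ∀ v, ‖g n v‖ ≤ Gb) {P : ℤ → ℂ} (hP : Summable (‖P ·‖))
    (hP1 : ∑' z, ‖P z‖ ≤ 1)
    (hbal : ∀ q, q ≠ e → q ≠ -e → J q * P q = ∑ n ∈ Icc 2 M, Sg n (g n) P q)
    {B : ℝ} (hPB : ∀ z ∉ H, ‖P z‖ ≤ B) {q : ℤ} (hq : q ∉ H) :
    ‖P q‖ ≤ Gb * (∑ n ∈ Icc 2 M, (n : ℝ)) * (∑' z, ‖P z‖) / c * B := by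
  have hqe : q ≠ e := fun h => hq (h ▸ he)
  have hqe' : q ≠ -e := fun h => hq (h ▸ H.neg_mem he)
  rw [div_mul_eq_mul_div, le_div_iff₀ hc, mul_comm]
  calc c * ‖P q‖ ≤ ‖J q‖ * ‖P q‖ := mul_le_mul_of_nonneg_right (hJ q hqe hqe') (norm_nonneg _)
    _ = ‖∑ n ∈ Icc 2 M, Sg n (g n) P q‖ := by rw [← norm_mul, hbal q hqe hqe']
    _ ≤ _ := norm_sum_Sg_le hq hP hP1 hPB fun n hn => hg n (mem_Icc.1 hn).1 (mem_Icc.1 hn).2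

theorem stmt11_general (a₀ c Gb : ℝ) (ha₀ : 0 < a₀) (hc : 0 < c) (hGb : 0 < Gb)
    (M : ℕ) :
    ∃ ε₀ ∈ Set.Ioo (0 : ℝ) 1,
      ∀ e : ℤ, 1 ≤ e →
      ∀ J : ℤ → ℂ, (∀ q : ℤ, q ≠ e → q ≠ -e → c ≤ ‖J q‖) →
      ∀ g : (n : ℕ) → (Fin n → ℤ) → ℂ,
        (∀ n : ℕ, 2 ≤ n → n ≤ M → ∀ v : Fin n → ℤ, ‖g n v‖ ≤ Gb) →
      ∀ P : ℤ → ℂ,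
        (∀ q : ℤ, P (-q) = starRingEnd ℂ (P q)) →
        (∀ q : ℤ, ‖P q‖ ≤ ε₀) →
        (∀ q : ℤ, q ≠ 0 → ‖P q‖ ≤ a₀ / (q : ℝ) ^ 2) →
        (∀ q : ℤ, q ≠ e → q ≠ -e → J q * P q = ∑ n ∈ Finset.Icc 2 M, Sg n (g n) P q) →
        ∀ β : ℤ, ¬ e ∣ β → P β = 0 := by
  set K := Gb * ∑ n ∈ Icc 2 M, (n : ℝ)
  have hK : 0 ≤ K := mul_nonneg hGb.le (sum_nonneg fun n _ => n.cast_nonneg)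
  obtain ⟨ε₀, hε₀, hA₀1, hKA₀⟩ := exists_tsum_min_le_one_and_mul_lt
    (invSqMajorant_nonneg ha₀.le) (summable_invSqMajorant a₀) K hc
  refine ⟨ε₀, hε₀, fun e _ J hJ g hg P _ hPε hPa hbal β hβ => ?_⟩
  have hPu := norm_le_min_invSqMajorant hε₀.2.le hPε hPa
  have hu := summable_invSqMajorant a₀
  have hP : Summable (‖P ·‖) :=
    hu.of_nonneg_of_le (fun _ => norm_nonneg _) fun z => (hPu z).trans (min_le_right _ _)
  have hA : ∑' z, ‖P z‖ ≤ ∑' z, min ε₀ (invSqMajorant a₀ z) :=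
    hP.tsum_le_tsum hPu <| hu.of_nonneg_of_le
      (fun z => le_min hε₀.1.le (invSqMajorant_nonneg ha₀.le z)) fun z => min_le_right _ _
  have hr1 : K * (∑' z, ‖P z‖) / c < 1 :=
    (div_lt_one hc).2 ((mul_le_mul_of_nonneg_left hA hK).trans_lt hKA₀)
  have hr0 : 0 ≤ K * (∑' z, ‖P z‖) / c := by positivity
  exact eq_zero_of_forall_bound_imp_norm_le_mul (S := (AddSubgroup.zmultiples e : Set ℤ)ᶜ)
    hr0 hr1 (fun z _ => hPε z)
    (fun B hPB q hq => norm_le_div_mul_of_harmonicBalance (AddSubgroup.mem_zmultiples e) hc hJ hg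
      hP (hA.trans hA₀1) hbal hPB hq)
    β (by simpa [Int.mem_zmultiples_iff] using hβ)

theorem stmt11 (a₀ c Gb : ℝ) (ha₀ : 0 < a₀) (hc : 0 < c) (hGb : 0 < Gb)
    (M : ℕ) (hM : 2 ≤ M) :
    ∃ ε₀ ∈ Set.Ioo (0 : ℝ) 1,
      ∀ e : ℤ, 1 ≤ e →
      ∀ J : ℤ → ℂ, (∀ q : ℤ, q ≠ e → q ≠ -e → c ≤ ‖J q‖) →
      ∀ g : (n : ℕ) → (Fin n → ℤ) → ℂ,
        (∀ n : ℕ, 2 ≤ n → n ≤ M → ∀ v : Fin n → ℤ, ‖g n v‖ ≤ Gb) →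
      ∀ P : ℤ → ℂ,
        (∀ q : ℤ, P (-q) = starRingEnd ℂ (P q)) →
        (∀ q : ℤ, ‖P q‖ ≤ ε₀) →
        (∀ q : ℤ, q ≠ 0 → ‖P q‖ ≤ a₀ / (q : ℝ) ^ 2) →
        (∀ q : ℤ, q ≠ e → q ≠ -e → J q * P q = ∑ n ∈ Finset.Icc 2 M, Sg n (g n) P q) →
        ∀ β : ℤ, ¬ e ∣ β → P β = 0 :=
  stmt11_general a₀ c Gb ha₀ hc hGb M
end

section
/- Let Ω ⊆ ℝ and let γ₀ ∈ ℝ be an accumulation point of Ω \ {γ₀}. Let β₁ : ℝ → ℂ be differentiable at γ₀ with β₁(γ₀) = 0, let D₁ : ℝ → ℂ be continuous at γ₀ with D₁(γ₀) ≠ 0, and set α = β₁′(γ₀)/D₁(γ₀); assume Re(α) ≠ 0. Let P₁ : Ω → ℂ satisfy P₁(γ) ≠ 0 for all γ ∈ Ω and |P₁(γ)| → 0 as γ → γ₀ within Ω, and suppose there is C ≥ 0 such that | |P₁(γ)|²·D₁(γ) − β₁(γ) | ≤ C·|P₁(γ)|⁴ for all γ ∈ Ω. Then: (a) α is a real number,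 i.e. Im(α) = 0; and (b) there exists δ > 0 such that for every γ ∈ Ω with 0 < |γ − γ₀| < δ one has Re(α)·(γ − γ₀) > 0. (Hence the bifurcation is direct if α > 0, i.e. the oscillating branch exists only for γ > γ₀, and inverse if α < 0.) -/
/-!
Divide the amplitude equation by `|P₁(γ)|²`: the error is `O(|P₁(γ)|²) → 0`, so
`β₁(γ) / |P₁(γ)|² → D₁(γ₀)`. Since also `β₁(γ) / (γ - γ₀) → β₁'(γ₀)`, the real quotient
`|P₁(γ)|² / (γ - γ₀)` tends to `β₁'(γ₀) / D₁(γ₀) = α`. A limit of real numbers is real, and as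
`Re α ≠ 0` the quotient eventually has the sign of `Re α`, which is the sign of `γ - γ₀`.
-/

open Filter Topology

theorem tendsto_div_sq_of_norm_sq_mul_sub_le {ι 𝕜 : Type*} [NormedField 𝕜] {l : Filter ι}
    {r β D : ι → 𝕜} {D₀ : 𝕜} {C : ℝ} (hr : Tendsto r l (𝓝 0)) (hr0 : ∀ᶠ x in l, r x ≠ 0)
    (hD : Tendsto D l (𝓝 D₀)) (hamp : ∀ᶠ x in l, ‖r x ^ 2 * D x - β x‖ ≤ C * ‖r x‖ ^ 4) :
    Tendsto (fun x => β x / r x ^ 2) l (𝓝 D₀) := by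
  have hbound : ∀ᶠ x in l, ‖D x - β x / r x ^ 2‖ ≤ C * ‖r x‖ ^ 2 := by
    filter_upwards [hr0, hamp] with x hx hx_amp
    calc ‖D x - β x / r x ^ 2‖ = ‖r x ^ 2 * D x - β x‖ / ‖r x‖ ^ 2 := by
          rw [← norm_pow, ← norm_div]; congr 1; field_simp
      _ ≤ C * ‖r x‖ ^ 4 / ‖r x‖ ^ 2 := by gcongr
      _ = C * ‖r x‖ ^ 2 := by field_simp
  have herr : Tendsto (fun x => D x - β x / r x ^ 2) l (𝓝 0) :=
    squeeze_zero_norm' hbound (by simpa using (hr.norm.pow 2).const_mul C)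
  simpa using hD.sub herr

theorem tendsto_of_mul_eventuallyEq {ι G₀ : Type*} [GroupWithZero G₀] [TopologicalSpace G₀]
    [ContinuousMul G₀] [ContinuousInv₀ G₀] [T1Space G₀] {l : Filter ι} {q h s : ι → G₀}
    {a b : G₀} (hs : Tendsto s l (𝓝 a)) (hh : Tendsto h l (𝓝 b)) (hb : b ≠ 0)
    (hqs : ∀ᶠ x in l, q x * h x = s x) : Tendsto q l (𝓝 (a / b)) := by
  refine (hs.div hh hb).congr' ?_
  filter_upwards [hh.eventually_ne hb, hqs] with x hx hqx
  rw [Pi.div_apply, ← hqx, mul_div_cancel_right₀ _ hx]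

theorem Complex.im_eq_zero_of_tendsto_ofReal {ι : Type*} {l : Filter ι} [l.NeBot] {q : ι → ℝ}
    {z : ℂ} (hq : Tendsto (fun x => (q x : ℂ)) l (𝓝 z)) : z.im = 0 :=
  tendsto_nhds_unique ((Complex.continuous_im.tendsto z).comp hq) (by simp [Function.comp_def])

theorem mul_pos_of_mul_div_pos {c a t : ℝ} (ha : 0 < a) (h : 0 < c * (a / t)) : 0 < c * t := by
  rw [mul_div_left_comm, mul_pos_iff_of_pos_left ha, div_pos_iff] at h
  exact mul_pos_iff.mpr h

theorem stmt14_general (Ω : Set ℝ) (γ₀ : ℝ) (hacc : γ₀ ∈ closure (Ω \ {γ₀}))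
    (β₁ D₁ : ℝ → ℂ) (β₁' : ℂ) (hβ : HasDerivAt β₁ β₁' γ₀) (hβ0 : β₁ γ₀ = 0)
    (hD : ContinuousAt D₁ γ₀) (hD0 : D₁ γ₀ ≠ 0)
    (α : ℂ) (hα : α = β₁' / D₁ γ₀) (hRe : α.re ≠ 0)
    (P₁ : ℝ → ℂ) (hP0 : ∀ γ ∈ Ω, P₁ γ ≠ 0)
    (hPlim : Filter.Tendsto (fun γ => ‖P₁ γ‖) (nhdsWithin γ₀ Ω) (nhds 0))
    (C : ℝ)
    (hamp : ∀ γ ∈ Ω, ‖((‖P₁ γ‖ : ℂ)) ^ 2 * D₁ γ - β₁ γ‖ ≤ C * ‖P₁ γ‖ ^ 4) :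
    α.im = 0 ∧
      ∃ δ > 0, ∀ γ ∈ Ω, γ ≠ γ₀ → |γ - γ₀| < δ → 0 < α.re * (γ - γ₀) := by
  set L := 𝓝[Ω \ {γ₀}] γ₀
  have : L.NeBot := mem_closure_iff_nhdsWithin_neBot.mp hacc
  have hLΩ : L ≤ 𝓝[Ω] γ₀ := nhdsWithin_mono _ Set.sdiff_subset
  have hΩ : ∀ᶠ γ in L, γ ∈ Ω := hLΩ self_mem_nhdsWithin
  have hβ_amp : Tendsto (fun γ => β₁ γ / (‖P₁ γ‖ : ℂ) ^ 2) L (𝓝 (D₁ γ₀)) :=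
    tendsto_div_sq_of_norm_sq_mul_sub_le (by simpa using (hPlim.mono_left hLΩ).ofReal)
      (by filter_upwards [hΩ] with γ hγ; simpa using hP0 γ hγ)
      (hD.tendsto.mono_left nhdsWithin_le_nhds)
      (by filter_upwards [hΩ] with γ hγ; simpa using hamp γ hγ)
  have hq : Tendsto (fun γ => ((‖P₁ γ‖ ^ 2 / (γ - γ₀) : ℝ) : ℂ)) L (𝓝 α) := by
    rw [hα]
    refine tendsto_of_mul_eventuallyEq ((hasDerivAt_iff_tendsto_slope.mp hβ).mono_left
      (nhdsWithin_mono _ fun _ h => h.2)) hβ_amp hD0 ?_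
    filter_upwards [hΩ] with γ hγ
    have hP : (‖P₁ γ‖ : ℂ) ≠ 0 := by simpa using hP0 γ hγ
    rw [slope_def_module, hβ0, sub_zero, Complex.real_smul]
    push_cast
    field_simp
  have hq_re : Tendsto (fun γ => ‖P₁ γ‖ ^ 2 / (γ - γ₀)) L (𝓝 α.re) := by
    simpa only [Function.comp_def, Complex.ofReal_re] using
      (Complex.continuous_re.tendsto α).comp hq
  have hpos : ∀ᶠ γ in L, 0 < α.re * (γ - γ₀) := by
    filter_upwards [(hq_re.const_mul α.re).eventually (lt_mem_nhds (mul_self_pos.2 hRe)), hΩ]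
      with γ hγ hγΩ
    exact mul_pos_of_mul_div_pos (pow_pos (norm_pos_iff.2 (hP0 γ hγΩ)) 2) hγ
  obtain ⟨δ, hδ, hball⟩ := Metric.mem_nhdsWithin_iff.mp hpos
  exact ⟨Complex.im_eq_zero_of_tendsto_ofReal hq, δ, hδ,
    fun γ hγΩ hne hlt => hball ⟨by rwa [Metric.mem_ball, Real.dist_eq], hγΩ, hne⟩⟩

theorem stmt14 (Ω : Set ℝ) (γ₀ : ℝ) (hacc : γ₀ ∈ closure (Ω \ {γ₀}))
    (β₁ D₁ : ℝ → ℂ) (β₁' : ℂ) (hβ : HasDerivAt β₁ β₁' γ₀) (hβ0 : β₁ γ₀ = 0)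
    (hD : ContinuousAt D₁ γ₀) (hD0 : D₁ γ₀ ≠ 0)
    (α : ℂ) (hα : α = β₁' / D₁ γ₀) (hRe : α.re ≠ 0)
    (P₁ : ℝ → ℂ) (hP0 : ∀ γ ∈ Ω, P₁ γ ≠ 0)
    (hPlim : Filter.Tendsto (fun γ => ‖P₁ γ‖) (nhdsWithin γ₀ Ω) (nhds 0))
    (C : ℝ) (hC : 0 ≤ C)
    (hamp : ∀ γ ∈ Ω, ‖((‖P₁ γ‖ : ℂ)) ^ 2 * D₁ γ - β₁ γ‖ ≤ C * ‖P₁ γ‖ ^ 4) :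
    α.im = 0 ∧
      ∃ δ > 0, ∀ γ ∈ Ω, γ ≠ γ₀ → |γ - γ₀| < δ → 0 < α.re * (γ - γ₀) :=
  stmt14_general Ω γ₀ hacc β₁ D₁ β₁' hβ hβ0 hD hD0 α hα hRe P₁ hP0 hPlim C hamp
end
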